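/- arXiv:1209.4691 — 10 statements merged into one kernel-verified Lean document; each statement's English description precedes it below -/
import Mathlib

section
/- Let ω be an infinite word over a finite integer alphabet. Then ω has bounded additive complexity if and only if the slope slope(ω) exists and there is a natural number M such that for every nonempty factor B of ω one has |slope(B) − slope(ω)| ≤ M/|B|. -/
/-- `B` is a factor of the infinite word `ω`. -/
def Factor (ω : ℕ → ℤ) (B : List ℤ) : Prop :=
  ∃ m : ℕ, B = (List.range B.length).map (fun i => ω (m + i))

/-- `ω` has bounded additive complexity: there is `M` such that for every `n ≥ 1`
the set of sums of factors of length `n` has at most `M` elements. -/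
def BoundedAddComplexity (ω : ℕ → ℤ) : Prop :=
  ∃ M : ℕ, ∀ n : ℕ, 1 ≤ n →
    ∃ T : Finset ℤ, T.card ≤ M ∧
      ∀ B : List ℤ, Factor ω B → B.length = n → B.sum ∈ T

/-- The slope of a finite word. -/
def wordSlope (B : List ℤ) : ℚ := (B.sum : ℚ) / (B.length : ℚ)

/-- `ω` has slope `L`. -/
def HasSlope (ω : ℕ → ℤ) (L : ℝ) : Prop :=
  Filter.Tendsto (fun n : ℕ => (∑ i ∈ Finset.range n, (ω i : ℝ)) / n)
    Filter.atTop (nhds L)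

/-!
Let `s n` be the sum of the first `n` letters and `|ω i| ≤ C`. Sliding a window of length `n` one
step changes its sum by at most `2C`, so if the window sums of length `n` take at most `M` values,
they lie in an interval of length `2CM`. Hence `|s (m + n) - s m - s n| ≤ 2CM`, and Fekete's lemma,
applied to the subadditive sequences `s + 2CM` and `2CM - s`, yields a slope `L` with
`|s n - n L| ≤ 2CM`; the factor bound follows with `M' = 4CM`. Conversely, the factor bound places
every factor sum of length `n` among the at most `2M + 1` integers of `[n L - M, n L + M]`.
-/

open Finset Filter Topology

lemma exists_le_lt_succ_of_le_of_lt (a : ℕ → ℤ) {t : ℤ} {q p : ℕ} (hqp : q ≤ p)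
    (hq : a q ≤ t) (hp : t < a p) : ∃ i, a i ≤ t ∧ t < a (i + 1) := by
  induction p, hqp using Nat.le_induction with
  | base => omega
  | succ p _ ih =>
    by_cases hp' : t < a p
    · exact ih hp'
    · exact ⟨p, not_lt.mp hp', hp⟩

/-- Every integer between `a q` and `a p` is within `d` above a value of `a`, so the `#V` intervals
`[v, v + d)` cover `[a q, a p)`. -/
theorem sub_le_mul_card_of_abs_succ_sub_le {a : ℕ → ℤ} {d : ℤ} {V : Finset ℤ}
    (hstep : ∀ i, |a (i + 1) - a i| ≤ d) (hV : ∀ i, a i ∈ V) (p q : ℕ) :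
    a p - a q ≤ d * #V := by
  have hd : 0 ≤ d := (abs_nonneg _).trans (hstep 0)
  rcases le_or_gt (a p) (a q) with hle | hlt
  · nlinarith [Int.natCast_nonneg (#V)]
  have hcover : Ico (a q) (a p) ⊆ V.biUnion fun v => Ico v (v + d) := by
    intro t ht
    rw [mem_Ico] at ht
    obtain ⟨v, hvV, hvt, htv⟩ : ∃ v ∈ V, v ≤ t ∧ t < v + d := by
      rcases le_total q p with hqp | hpq
      · obtain ⟨i, hi, hi'⟩ := exists_le_lt_succ_of_le_of_lt a hqp ht.1 ht.2
        have := (abs_le.mp (hstep i)).2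
        exact ⟨a i, hV i, hi, by omega⟩
      · obtain ⟨i, hi, hi'⟩ := exists_le_lt_succ_of_le_of_lt (fun i => -a i) (t := -t - 1) hpq
          (by omega) (by omega)
        have := (abs_le.mp (hstep i)).1
        exact ⟨a (i + 1), hV (i + 1), by omega, by omega⟩
    exact mem_biUnion.mpr ⟨v, hvV, mem_Ico.mpr ⟨hvt, htv⟩⟩
  have hcard := (card_le_card hcover).trans card_biUnion_le
  simp only [Int.card_Ico, add_sub_cancel_left, sum_const, smul_eq_mul] at hcard
  have := Int.ofNat_le.mpr hcard
  push_cast [Int.toNat_of_nonneg hd, Int.toNat_of_nonneg (sub_nonneg.mpr hlt.le)] at this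
  linarith

section QuasiAdditive

variable {u : ℕ → ℝ} {K : ℝ}

lemma abs_apply_zero_le_of_abs_add_sub_le (h : ∀ m n, |u (m + n) - u m - u n| ≤ K) :
    |u 0| ≤ K := by
  simpa using h 0 0

lemma subadditive_add_const_of_abs_add_sub_le (h : ∀ m n, |u (m + n) - u m - u n| ≤ K) :
    Subadditive fun n => u n + K := fun m n => by
  linarith [(abs_le.mp (h m n)).2]

lemma add_mul_sub_le_of_abs_add_sub_le (h : ∀ m n, |u (m + n) - u m - u n| ≤ K) (n : ℕ) :
    u 0 + n * (u 1 - K) ≤ u n := by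
  induction n with
  | zero => simp
  | succ n ih =>
    push_cast
    linarith [(abs_le.mp (h n 1)).1]

lemma bddBelow_add_const_div_of_abs_add_sub_le (h : ∀ m n, |u (m + n) - u m - u n| ≤ K) :
    BddBelow (Set.range fun n : ℕ => (u n + K) / n) := by
  refine ⟨min 0 (u 1 - K), ?_⟩
  rintro _ ⟨n, rfl⟩
  rcases Nat.eq_zero_or_pos n with rfl | hn
  · simp
  have hu0 := (abs_le.mp (abs_apply_zero_le_of_abs_add_sub_le h)).1
  have := add_mul_sub_le_of_abs_add_sub_le h n
  exact (min_le_right _ _).trans <| (le_div_iff₀ (by positivity)).mpr (by linarith)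

lemma exists_tendsto_div_and_mul_le_of_abs_add_sub_le
    (h : ∀ m n, |u (m + n) - u m - u n| ≤ K) :
    ∃ L, Tendsto (fun n : ℕ => u n / n) atTop (𝓝 L) ∧ ∀ n : ℕ, n * L ≤ u n + K := by
  have hsub := subadditive_add_const_of_abs_add_sub_le h
  have hbdd := bddBelow_add_const_div_of_abs_add_sub_le h
  refine ⟨hsub.lim, ?_, fun n => ?_⟩
  · have hK : Tendsto (fun n : ℕ => K / n) atTop (𝓝 0) := tendsto_const_div_atTop_nhds_zero_nat K
    simpa [add_div] using (hsub.tendsto_lim hbdd).sub hK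
  · rcases Nat.eq_zero_or_pos n with rfl | hn
    · simp only [CharP.cast_eq_zero, zero_mul]
      linarith [(abs_le.mp (abs_apply_zero_le_of_abs_add_sub_le h)).1]
    · have := hsub.lim_le_div hbdd hn.ne'
      rwa [le_div_iff₀ (by positivity), mul_comm] at this

theorem exists_tendsto_div_and_abs_sub_mul_le_of_abs_add_sub_le
    (h : ∀ m n, |u (m + n) - u m - u n| ≤ K) :
    ∃ L, Tendsto (fun n : ℕ => u n / n) atTop (𝓝 L) ∧ ∀ n : ℕ, |u n - n * L| ≤ K := by
  obtain ⟨L, hL, hle⟩ := exists_tendsto_div_and_mul_le_of_abs_add_sub_le h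
  have hneg : ∀ m n, |(-u) (m + n) - (-u) m - (-u) n| ≤ K := fun m n => by
    rw [← abs_neg]
    convert h m n using 2
    simp only [Pi.neg_apply]
    ring
  obtain ⟨L', hL', hle'⟩ := exists_tendsto_div_and_mul_le_of_abs_add_sub_le hneg
  have hL'L : L' = -L := tendsto_nhds_unique hL' (by simpa [neg_div] using hL.neg)
  subst hL'L
  refine ⟨L, hL, fun n => abs_le.mpr ⟨?_, ?_⟩⟩
  · linarith [hle n]
  · have := hle' n
    simp only [Pi.neg_apply, mul_neg] at this
    linarith

end QuasiAdditive

theorem card_Icc_ceil_sub_floor_add_le {R : Type*} [Ring R] [LinearOrder R] [FloorRing R]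
    [IsOrderedRing R] (x : R) (M : ℕ) : #(Icc ⌈x - M⌉ ⌊x + M⌋) ≤ 2 * M + 1 := by
  rw [Int.card_Icc, Int.ceil_sub_natCast, Int.floor_add_natCast]
  have := Int.floor_le_ceil x
  omega

def partialSum (ω : ℕ → ℤ) (n : ℕ) : ℤ := ∑ i ∈ range n, ω i

lemma sum_map_range_add_eq_partialSum_sub (ω : ℕ → ℤ) (m n : ℕ) :
    ((List.range n).map fun i => ω (m + i)).sum = partialSum ω (m + n) - partialSum ω m := by
  rw [partialSum, partialSum, sum_range_add, add_sub_cancel_left, sum_eq_multiset_sum,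
    range_val, Multiset.range, Multiset.map_coe, Multiset.sum_coe]

lemma factor_map_range_add (ω : ℕ → ℤ) (m n : ℕ) :
    Factor ω ((List.range n).map fun i => ω (m + i)) :=
  ⟨m, by simp⟩

lemma Factor.exists_sum_eq {ω : ℕ → ℤ} {B : List ℤ} (h : Factor ω B) :
    ∃ m, B.sum = partialSum ω (m + B.length) - partialSum ω m := by
  obtain ⟨m, hm⟩ := h
  refine ⟨m, ?_⟩
  nth_rewrite 1 [hm]
  exact sum_map_range_add_eq_partialSum_sub ω m _

lemma abs_wordSlope_sub_le_iff {B : List ℤ} (hB : B ≠ []) (L c : ℝ) :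
    |(wordSlope B : ℝ) - L| ≤ c / B.length ↔ |(B.sum : ℝ) - B.length * L| ≤ c := by
  have hlen : (0 : ℝ) < B.length := by exact_mod_cast List.length_pos_iff.mpr hB
  rw [wordSlope, Rat.cast_div, Rat.cast_intCast, Rat.cast_natCast,
    show (B.sum : ℝ) / B.length - L = (B.sum - B.length * L) / B.length by field_simp,
    abs_div, abs_of_pos hlen, div_le_div_iff_of_pos_right hlen]

lemma abs_window_succ_sub_le {ω : ℕ → ℤ} {C : ℤ} (hC : ∀ i, |ω i| ≤ C) (m n : ℕ) :
    |(partialSum ω (m + 1 + n) - partialSum ω (m + 1)) - (partialSum ω (m + n) - partialSum ω m)|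
      ≤ 2 * C := by
  rw [add_right_comm]
  simp only [partialSum, sum_range_succ]
  have := abs_le.mp (hC m)
  have := abs_le.mp (hC (m + n))
  rw [abs_le]
  constructor <;> linarith

theorem exists_abs_partialSum_add_sub_le {ω : ℕ → ℤ} (hfin : (Set.range ω).Finite)
    (h : BoundedAddComplexity ω) :
    ∃ K : ℕ, ∀ m n, |partialSum ω (m + n) - partialSum ω m - partialSum ω n| ≤ K := by
  obtain ⟨C, hC⟩ := (hfin.image Int.natAbs).bddAbove
  have hωC : ∀ i, |ω i| ≤ C := fun i => by
    rw [Int.abs_eq_natAbs]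
    exact_mod_cast hC ⟨ω i, ⟨i, rfl⟩, rfl⟩
  obtain ⟨M, hM⟩ := h
  refine ⟨2 * C * M, fun m n => ?_⟩
  rcases Nat.eq_zero_or_pos n with rfl | hn
  · rw [add_zero, sub_self, zero_sub, partialSum, sum_range_zero, neg_zero, abs_zero]
    positivity
  obtain ⟨T, hTcard, hT⟩ := hM n hn
  have hmem : ∀ i, partialSum ω (i + n) - partialSum ω i ∈ T := fun i => by
    rw [← sum_map_range_add_eq_partialSum_sub]
    exact hT _ (factor_map_range_add ω i n) (by simp)
  have hspan := sub_le_mul_card_of_abs_succ_sub_le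
    (a := fun i => partialSum ω (i + n) - partialSum ω i) (abs_window_succ_sub_le hωC · n) hmem
  have hTM : (2 * C : ℤ) * #T ≤ 2 * C * M :=
    mul_le_mul_of_nonneg_left (by exact_mod_cast hTcard) (by positivity)
  have h₁ := hspan m 0
  have h₂ := hspan 0 m
  have h₀ : partialSum ω 0 = 0 := sum_range_zero _
  rw [zero_add, h₀, sub_zero] at h₁ h₂
  rw [abs_le]
  push_cast
  constructor <;> linarith

theorem exists_hasSlope_of_boundedAddComplexity {ω : ℕ → ℤ} (hfin : (Set.range ω).Finite)
    (h : BoundedAddComplexity ω) :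
    ∃ L : ℝ, HasSlope ω L ∧ ∃ M : ℕ, ∀ B : List ℤ, Factor ω B → B ≠ [] →
      |(wordSlope B : ℝ) - L| ≤ (M : ℝ) / (B.length : ℝ) := by
  obtain ⟨K, hK⟩ := exists_abs_partialSum_add_sub_le hfin h
  obtain ⟨L, hlim, hL⟩ := exists_tendsto_div_and_abs_sub_mul_le_of_abs_add_sub_le
    (u := fun n => (partialSum ω n : ℝ)) (K := K) fun m n => by exact_mod_cast hK m n
  refine ⟨L, by simpa [HasSlope, partialSum] using hlim, 2 * K, fun B hB hne => ?_⟩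
  rw [abs_wordSlope_sub_le_iff hne]
  obtain ⟨m, hm⟩ := hB.exists_sum_eq
  set n := B.length
  have h₁ : |(partialSum ω (m + n) : ℝ) - partialSum ω m - partialSum ω n| ≤ K := by
    exact_mod_cast hK m n
  calc |(B.sum : ℝ) - n * L|
      = |((partialSum ω (m + n) : ℝ) - partialSum ω m - partialSum ω n)
          + (partialSum ω n - n * L)| := by rw [hm]; push_cast; ring_nf
    _ ≤ K + K := (abs_add_le _ _).trans (add_le_add h₁ (hL n))
    _ = ((2 * K : ℕ) : ℝ) := by push_cast; ring

theorem boundedAddComplexity_of_abs_wordSlope_sub_le {ω : ℕ → ℤ} (L : ℝ) (M : ℕ)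
    (h : ∀ B : List ℤ, Factor ω B → B ≠ [] →
      |(wordSlope B : ℝ) - L| ≤ (M : ℝ) / (B.length : ℝ)) :
    BoundedAddComplexity ω := by
  refine ⟨2 * M + 1, fun n hn => ⟨Icc ⌈n * L - M⌉ ⌊n * L + M⌋,
    card_Icc_ceil_sub_floor_add_le _ M, fun B hB hlen => ?_⟩⟩
  have hne : B ≠ [] := List.ne_nil_of_length_pos (hlen ▸ hn)
  have hB := abs_le.mp <| (abs_wordSlope_sub_le_iff hne L M).mp (h B hB hne)
  rw [hlen] at hB
  rw [mem_Icc, Int.ceil_le, Int.le_floor]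
  constructor <;> linarith [hB.1, hB.2]

/-- An infinite word over a finite integer alphabet has bounded additive complexity
iff its slope exists and every nonempty factor's slope is within `M/|B|` of it. -/
theorem stmt0 (ω : ℕ → ℤ) (hfin : (Set.range ω).Finite) :
    BoundedAddComplexity ω ↔
      ∃ L : ℝ, HasSlope ω L ∧ ∃ M : ℕ, ∀ B : List ℤ, Factor ω B → B ≠ [] →
        |(wordSlope B : ℝ) - L| ≤ (M : ℝ) / (B.length : ℝ) :=
  ⟨exists_hasSlope_of_boundedAddComplexity hfin,
    fun ⟨L, _, M, hM⟩ => boundedAddComplexity_of_abs_wordSlope_sub_le L M hM⟩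
end

section
/- Let ω₁ and ω₂ be infinite words over finite integer alphabets, each with bounded additive complexity, and suppose that slope(ω₁) and slope(ω₂) both exist and slope(ω₁) ≠ slope(ω₂). Then there exists M ∈ ℕ such that slope(B₁) ≠ slope(B₂) whenever B₁ is a factor of ω₁, B₂ is a factor of ω₂, and |B₁|, |B₂| ≥ M. -/
/-!
Let `|ω i| ≤ K` and let at most `M` integers occur as sums of factors of length `n`. Sliding a
window of length `n` one step changes its sum by at most `2K`, so by a discrete intermediate value
argument the window sums fill the interval between any two of them up to gaps of size `4K + 1`;
since only `M` values occur, all these sums lie within `(4K + 1) M` of each other, uniformly in `n`.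
Averaging over consecutive blocks of length `n` then shows that every factor `B` satisfies
`|ΣB - |B| L| ≤ C` for a constant `C`, so `slope B → L` uniformly as `|B| → ∞`, and two words with
different slopes cannot share the slope of long factors.
-/

open Finset Filter

theorem exists_abs_sub_le_of_mem_uIcc {α : Type*} [AddCommGroup α] [LinearOrder α]
    [IsOrderedAddMonoid α] {f : ℕ → α} {s : α} (hf : ∀ m, |f (m + 1) - f m| ≤ s)
    {a b : ℕ} {v : α} (hv : v ∈ Set.uIcc (f a) (f b)) : ∃ j, |f j - v| ≤ s := by
  wlog hab : a ≤ b generalizing a b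
  · exact this (Set.uIcc_comm (f a) (f b) ▸ hv) (le_of_not_ge hab)
  induction b, hab using Nat.le_induction with
  | base => exact ⟨a, by simp_all [(abs_nonneg _).trans (hf 0)]⟩
  | succ b _ ih =>
    rcases Set.uIcc_subset_uIcc_union_uIcc hv with hv | hv
    · exact ih hv
    · exact ⟨b, abs_sub_comm (f b) v ▸ (Set.abs_sub_left_of_mem_uIcc hv).trans (hf b)⟩

/-- Pigeonhole: each of the `#T + 1` points `f a + (2s + 1) k`, `k ≤ #T`, would lie within `s` of
a value of `f`, and these values would be pairwise distinct. -/
theorem abs_sub_le_of_abs_succ_sub_le {f : ℕ → ℤ} {s : ℤ} (hf : ∀ m, |f (m + 1) - f m| ≤ s)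
    {T : Finset ℤ} (hT : ∀ m, f m ∈ T) (a b : ℕ) : |f b - f a| ≤ (2 * s + 1) * #T := by
  wlog hab : f a ≤ f b generalizing a b
  · exact abs_sub_comm (f b) (f a) ▸ this b a (le_of_not_ge hab)
  by_contra! hlt
  rw [abs_of_nonneg (sub_nonneg.2 hab)] at hlt
  have hs : 0 ≤ s := (abs_nonneg _).trans (hf 0)
  have hnear : ∀ k ∈ range (#T + 1), ∃ j, |f j - (f a + (2 * s + 1) * k)| ≤ s := by
    intro k hk
    have hkT : (k : ℤ) ≤ #T := by simpa [Nat.lt_succ_iff] using hk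
    refine exists_abs_sub_le_of_mem_uIcc hf (a := a) (b := b) (Set.mem_uIcc_of_le ?_ ?_) <;>
      nlinarith
  choose! j hj using hnear
  obtain ⟨k, hk, k', hk', hkk', heq⟩ := exists_ne_map_eq_of_card_lt_of_maps_to
    (by simp : #T < #(range (#T + 1))) (f := fun k => f (j k)) (fun k _ => hT (j k))
  have h₁ := abs_le.1 (hj k hk)
  have h₂ := abs_le.1 (heq ▸ hj k' hk')
  rcases Nat.lt_or_gt_of_ne hkk' with h | h
  · have : (k : ℤ) + 1 ≤ k' := by exact_mod_cast h
    nlinarith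
  · have : (k' : ℤ) + 1 ≤ k := by exact_mod_cast h
    nlinarith

def windowSum (ω : ℕ → ℤ) (n m : ℕ) : ℤ := ∑ i ∈ range n, ω (m + i)

theorem sum_window_eq_windowSum (ω : ℕ → ℤ) (n m : ℕ) :
    ((List.range n).map fun i => ω (m + i)).sum = windowSum ω n m := by
  rw [windowSum, Finset.sum_eq_multiset_sum]
  rfl

theorem factor_window (ω : ℕ → ℤ) (n m : ℕ) : Factor ω ((List.range n).map fun i => ω (m + i)) :=
  ⟨m, by simp⟩

theorem Factor.exists_sum_eq_windowSum {ω : ℕ → ℤ} {B : List ℤ} (hB : Factor ω B) :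
    ∃ m, B.sum = windowSum ω B.length m := by
  obtain ⟨m, hm⟩ := hB
  exact ⟨m, by rw [hm, sum_window_eq_windowSum, List.length_map, List.length_range]⟩

theorem windowSum_one (ω : ℕ → ℤ) (m : ℕ) : windowSum ω 1 m = ω m := by
  simp [windowSum]

theorem abs_windowSum_succ_sub_le {ω : ℕ → ℤ} {K : ℤ} (hK : ∀ i, |ω i| ≤ K) (n m : ℕ) :
    |windowSum ω n (m + 1) - windowSum ω n m| ≤ 2 * K := by
  have hslide : windowSum ω n (m + 1) + ω m = windowSum ω n m + ω (m + n) := by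
    have h := (sum_range_succ' (fun i => ω (m + i)) n).symm.trans (sum_range_succ _ n)
    simp only [add_zero, ← add_assoc] at h
    simpa [windowSum, add_right_comm m] using h
  have h₁ := abs_le.1 (hK m)
  have h₂ := abs_le.1 (hK (m + n))
  rw [abs_le]
  constructor <;> linarith

theorem sum_range_mul_eq_sum_windowSum (ω : ℕ → ℤ) (k n : ℕ) :
    ∑ i ∈ range (k * n), ω i = ∑ j ∈ range k, windowSum ω n (j * n) := by
  induction k with
  | zero => simp
  | succ k ih => rw [Nat.succ_mul, sum_range_add, ih, sum_range_succ, windowSum]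

theorem HasSlope.abs_sub_mul_le {ω : ℕ → ℤ} {L : ℝ} (hω : HasSlope ω L) {n : ℕ} (hn : 0 < n)
    {S D : ℝ} (h : ∀ m, |(windowSum ω n m : ℝ) - S| ≤ D) : |S - n * L| ≤ D := by
  have hn' : (0 : ℝ) < n := by exact_mod_cast hn
  have hblock : ∀ k : ℕ, |∑ i ∈ range (k * n), (ω i : ℝ) - k * S| ≤ k * D := fun k =>
    calc |∑ i ∈ range (k * n), (ω i : ℝ) - k * S|
        = |∑ j ∈ range k, ((windowSum ω n (j * n) : ℝ) - S)| := by
          rw [← Int.cast_sum, sum_range_mul_eq_sum_windowSum]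
          simp
      _ ≤ ∑ j ∈ range k, |(windowSum ω n (j * n) : ℝ) - S| := abs_sum_le_sum_abs _ _
      _ ≤ ∑ _j ∈ range k, D := sum_le_sum fun j _ => h (j * n)
      _ = k * D := by simp
  have hL : L ∈ Metric.closedBall (S / n) (D / n) := by
    refine Metric.isClosed_closedBall.mem_of_tendsto (hω.comp (tendsto_id.atTop_mul_const' hn)) ?_
    filter_upwards [eventually_gt_atTop 0] with k hk
    set P := ∑ i ∈ range (k * n), (ω i : ℝ)
    have hkn : (0 : ℝ) < k * n := by positivity
    rw [Function.comp_apply, id, Nat.cast_mul, Metric.mem_closedBall, Real.dist_eq,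
      show P / (k * n) - S / n = (P - k * S) / (k * n) by field_simp, abs_div, abs_of_pos hkn,
      div_le_div_iff₀ hkn hn']
    calc |P - k * S| * n ≤ k * D * n := by gcongr; exact hblock k
      _ = D * (k * n) := by ring
  rw [Metric.mem_closedBall, Real.dist_eq] at hL
  calc |S - n * L| = n * |L - S / n| := by
        rw [show S - n * L = -(n * (L - S / n)) by field_simp; ring, abs_neg, abs_mul,
          abs_of_pos hn']
    _ ≤ n * (D / n) := by gcongr
    _ = D := by field_simp

namespace BoundedAddComplexity

variable {ω : ℕ → ℤ}

theorem exists_windowSum_mem (hb : BoundedAddComplexity ω) :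
    ∃ M : ℕ, ∀ n, 1 ≤ n → ∃ T : Finset ℤ, #T ≤ M ∧ ∀ m, windowSum ω n m ∈ T := by
  obtain ⟨M, hM⟩ := hb
  refine ⟨M, fun n hn => ?_⟩
  obtain ⟨T, hTM, hT⟩ := hM n hn
  refine ⟨T, hTM, fun m => ?_⟩
  rw [← sum_window_eq_windowSum]
  exact hT _ (factor_window ω n m) (by simp)

theorem exists_abs_le (hb : BoundedAddComplexity ω) : ∃ K : ℤ, ∀ i, |ω i| ≤ K := by
  obtain ⟨_, hM⟩ := hb.exists_windowSum_mem
  obtain ⟨T, -, hT⟩ := hM 1 le_rfl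
  obtain ⟨K, hK⟩ := (T.image abs).bddAbove
  exact ⟨K, fun i => hK (mem_image_of_mem abs (windowSum_one ω i ▸ hT i))⟩

theorem exists_abs_sum_sub_le (hb : BoundedAddComplexity ω) {L : ℝ} (hω : HasSlope ω L) :
    ∃ C : ℝ, ∀ B : List ℤ, Factor ω B → 1 ≤ B.length → |(B.sum : ℝ) - B.length * L| ≤ C := by
  obtain ⟨K, hK⟩ := hb.exists_abs_le
  obtain ⟨M, hM⟩ := hb.exists_windowSum_mem
  have hK0 : 0 ≤ K := (abs_nonneg _).trans (hK 0)
  refine ⟨(2 * (2 * K) + 1) * M, fun B hB hlen => ?_⟩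
  obtain ⟨T, hTM, hT⟩ := hM B.length hlen
  obtain ⟨m₀, hm₀⟩ := hB.exists_sum_eq_windowSum
  rw [hm₀]
  refine hω.abs_sub_mul_le hlen fun m => ?_
  have hfar := abs_sub_le_of_abs_succ_sub_le (abs_windowSum_succ_sub_le hK B.length) hT m₀ m
  have hTM' : ((#T : ℤ) : ℝ) ≤ M := by exact_mod_cast hTM
  calc |(windowSum ω B.length m : ℝ) - windowSum ω B.length m₀|
      ≤ (2 * (2 * K) + 1) * (#T : ℤ) := by exact_mod_cast hfar
    _ ≤ (2 * (2 * K) + 1) * M := by gcongr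

theorem exists_abs_wordSlope_sub_lt (hb : BoundedAddComplexity ω) {L : ℝ} (hω : HasSlope ω L)
    {ε : ℝ} (hε : 0 < ε) :
    ∃ N : ℕ, ∀ B : List ℤ, Factor ω B → N ≤ B.length → |(wordSlope B : ℝ) - L| < ε := by
  obtain ⟨C, hC⟩ := hb.exists_abs_sum_sub_le hω
  obtain ⟨N, hN⟩ := exists_nat_gt (C / ε)
  refine ⟨N + 1, fun B hB hlen => ?_⟩
  have hpos : (0 : ℝ) < B.length := by exact_mod_cast (N.succ_pos.trans_le hlen)
  have hNlen : (N : ℝ) ≤ B.length := by exact_mod_cast N.le_succ.trans hlen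
  have hCε : C < ε * B.length := by
    rw [div_lt_iff₀ hε] at hN
    nlinarith
  calc |(wordSlope B : ℝ) - L| = |(B.sum : ℝ) - B.length * L| / B.length := by
        rw [wordSlope, Rat.cast_div, Rat.cast_intCast, Rat.cast_natCast, ← abs_of_pos hpos,
          ← abs_div, abs_of_pos hpos, sub_div, mul_div_cancel_left₀ _ hpos.ne']
    _ ≤ C / B.length := by gcongr; exact hC B hB (by omega)
    _ < ε := by rwa [div_lt_iff₀ hpos]

end BoundedAddComplexity

theorem stmt2_general (ω₁ ω₂ : ℕ → ℤ)
    (hb1 : BoundedAddComplexity ω₁) (hb2 : BoundedAddComplexity ω₂)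
    (L₁ L₂ : ℝ) (hs1 : HasSlope ω₁ L₁) (hs2 : HasSlope ω₂ L₂) (hne : L₁ ≠ L₂) :
    ∃ M : ℕ, ∀ B₁ B₂ : List ℤ, Factor ω₁ B₁ → Factor ω₂ B₂ →
      M ≤ B₁.length → M ≤ B₂.length → wordSlope B₁ ≠ wordSlope B₂ := by
  have hε : 0 < |L₁ - L₂| / 2 := by simpa [sub_eq_zero] using hne
  obtain ⟨N₁, hN₁⟩ := hb1.exists_abs_wordSlope_sub_lt hs1 hε
  obtain ⟨N₂, hN₂⟩ := hb2.exists_abs_wordSlope_sub_lt hs2 hε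
  refine ⟨max N₁ N₂, fun B₁ B₂ hB₁ hB₂ hl₁ hl₂ heq => ?_⟩
  have h₁ := hN₁ B₁ hB₁ (le_of_max_le_left hl₁)
  have h₂ := hN₂ B₂ hB₂ (le_of_max_le_right hl₂)
  rw [heq] at h₁
  have := abs_sub_le L₁ (wordSlope B₂ : ℝ) L₂
  rw [abs_sub_comm L₁ (wordSlope B₂ : ℝ)] at this
  linarith

/-- Words with bounded additive complexity and different slopes: long enough factors
have different slopes. -/
theorem stmt2 (ω₁ ω₂ : ℕ → ℤ)
    (h1 : (Set.range ω₁).Finite) (h2 : (Set.range ω₂).Finite)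
    (hb1 : BoundedAddComplexity ω₁) (hb2 : BoundedAddComplexity ω₂)
    (L₁ L₂ : ℝ) (hs1 : HasSlope ω₁ L₁) (hs2 : HasSlope ω₂ L₂) (hne : L₁ ≠ L₂) :
    ∃ M : ℕ, ∀ B₁ B₂ : List ℤ, Factor ω₁ B₁ → Factor ω₂ B₂ →
      M ≤ B₁.length → M ≤ B₂.length → wordSlope B₁ ≠ wordSlope B₂ :=
  stmt2_general ω₁ ω₂ hb1 hb2 L₁ L₂ hs1 hs2 hne
end

section
/- Let ω₁ and ω₂ be infinite words over finite integer alphabets, each with bounded additive complexity, and suppose that slope(ω₁) and slope(ω₂) both exist and slope(ω₁) ≠ slope(ω₂). Then the set of finite words that are factors of both ω₁ and ω₂ is finite. -/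
/-!
Let `K` bound `|ω|` and let `M` bound the additive complexity. For a fixed length `n`, the window
sums `k ↦ ω k + ⋯ + ω (k + n - 1)` take at most `M` values and consecutive ones differ by at
most `2K`; a walk with steps at most `d` through at most `M` values stays within `M d` of its
start. So every factor of length `n` has sum within `2KM` of the prefix sum of length `n`, and
the slopes of long factors all tend to `slope ω`. Different slopes therefore bound the length of
common factors, and there are finitely many words of bounded length over the alphabet of `ω₁`,
which is finite by the case `n = 1`.
-/

open Finset Filter

section Walk

variable {α : Type*} [AddCommGroup α] [LinearOrder α] [IsOrderedAddMonoid α] [DecidableEq α]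

theorem abs_sub_add_le_card_image_nsmul (f : ℕ → α) {d : α}
    (hstep : ∀ k, |f (k + 1) - f k| ≤ d) (m : ℕ) :
    ∀ j ≤ m, |f j - f 0| + d ≤ #((range (m + 1)).image f) • d := by
  induction m with
  | zero =>
    intro j hj
    obtain rfl : j = 0 := by omega
    simp
  | succ m ih =>
    have hd : 0 ≤ d := (abs_nonneg _).trans (hstep 0)
    have hj : ∀ j ≤ m + 1, j ≤ m ∨ j = m + 1 := fun j hj => by omega
    rw [range_add_one, image_insert]
    by_cases hmem : f (m + 1) ∈ (range (m + 1)).image f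
    · rw [insert_eq_of_mem hmem]
      intro j hjm
      rcases hj j hjm with hjm | rfl
      · exact ih j hjm
      · obtain ⟨i, hi, hfi⟩ := mem_image.mp hmem
        rw [← hfi]
        exact ih i (Nat.lt_succ_iff.mp (mem_range.mp hi))
    · rw [card_insert_of_notMem hmem, succ_nsmul]
      intro j hjm
      rcases hj j hjm with hjm | rfl
      · exact (ih j hjm).trans (le_add_of_nonneg_right hd)
      · calc |f (m + 1) - f 0| + d ≤ |f (m + 1) - f m| + |f m - f 0| + d := by
              gcongr; exact abs_sub_le _ _ _
          _ ≤ |f m - f 0| + d + d := by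
              rw [add_comm |f (m + 1) - f m|]; gcongr; exact hstep m
          _ ≤ _ := by gcongr; exact ih m le_rfl

theorem abs_sub_le_card_nsmul_of_forall_mem (f : ℕ → α) {d : α}
    (hstep : ∀ k, |f (k + 1) - f k| ≤ d) {T : Finset α} (hT : ∀ k, f k ∈ T) (m : ℕ) :
    |f m - f 0| ≤ #T • d := by
  have hd : 0 ≤ d := (abs_nonneg _).trans (hstep 0)
  have hsub : (range (m + 1)).image f ⊆ T := by
    intro x hx
    obtain ⟨k, -, rfl⟩ := mem_image.mp hx
    exact hT k
  calc |f m - f 0| ≤ |f m - f 0| + d := le_add_of_nonneg_right hd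
    _ ≤ #((range (m + 1)).image f) • d := abs_sub_add_le_card_image_nsmul f hstep m m le_rfl
    _ ≤ #T • d := nsmul_le_nsmul_left hd (card_le_card hsub)

end Walk

theorem sum_range_shift_succ_sub {G : Type*} [AddCommGroup G] (ω : ℕ → G) (n k : ℕ) :
    ∑ i ∈ range n, ω (k + 1 + i) - ∑ i ∈ range n, ω (k + i) = ω (k + n) - ω k := by
  have h₁ := sum_range_succ (fun i => ω (k + i)) n
  have h₂ : ∑ i ∈ range (n + 1), ω (k + i) = ∑ i ∈ range n, ω (k + 1 + i) + ω k := by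
    rw [sum_range_succ', add_zero]
    congr 1
    exact sum_congr rfl fun i _ => by rw [add_comm i, ← add_assoc]
  rw [sub_eq_sub_iff_add_eq_add, ← h₂, h₁, add_comm]

theorem List.finite_setOf_forall_mem_length_lt {α : Type*} {s : Set α} (hs : s.Finite) (n : ℕ) :
    {l : List α | (∀ x ∈ l, x ∈ s) ∧ l.length < n}.Finite := by
  have := hs.to_subtype
  refine ((List.finite_length_lt s n).image (List.map (↑))).subset ?_
  rintro l ⟨hl, hlen⟩
  lift l to List s using hl
  exact ⟨l, by rwa [List.length_map] at hlen, rfl⟩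

namespace Factor

variable {ω : ℕ → ℤ} {B : List ℤ}

theorem map_range (ω : ℕ → ℤ) (n m : ℕ) : Factor ω ((List.range n).map fun i => ω (m + i)) :=
  ⟨m, by rw [List.length_map, List.length_range]⟩

theorem sum_eq (h : Factor ω B) : ∃ m, B.sum = ∑ i ∈ range B.length, ω (m + i) := by
  obtain ⟨m, hm⟩ := h
  refine ⟨m, ?_⟩
  conv_lhs => rw [hm]
  -- `∑ i ∈ range n, g i` unfolds to the sum of the list `(List.range n).map g`
  rfl

theorem mem_range (h : Factor ω B) {x : ℤ} (hx : x ∈ B) : x ∈ Set.range ω := by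
  obtain ⟨m, hm⟩ := h
  rw [hm, List.mem_map] at hx
  obtain ⟨i, -, rfl⟩ := hx
  exact ⟨m + i, rfl⟩

end Factor

namespace BoundedAddComplexity

variable {ω : ℕ → ℤ}

theorem finite_range (hb : BoundedAddComplexity ω) : (Set.range ω).Finite := by
  obtain ⟨M, hM⟩ := hb
  obtain ⟨T, -, hT⟩ := hM 1 le_rfl
  refine T.finite_toSet.subset ?_
  rintro _ ⟨k, rfl⟩
  simpa using hT [ω k] ⟨k, by simp⟩ rfl

theorem exists_abs_sum_shift_sub_sum_le (hb : BoundedAddComplexity ω) :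
    ∃ C : ℤ, ∀ n m, |∑ i ∈ range n, ω (m + i) - ∑ i ∈ range n, ω i| ≤ C := by
  obtain ⟨K, hK⟩ : BddAbove (Set.range fun k => |ω k|) := by
    refine (hb.finite_range.image (|·|)).bddAbove.mono ?_
    rintro _ ⟨k, rfl⟩
    exact ⟨ω k, ⟨k, rfl⟩, rfl⟩
  have hωK : ∀ k, |ω k| ≤ K := fun k => hK ⟨k, rfl⟩
  have hK₀ : 0 ≤ 2 * K := by linarith [(abs_nonneg _).trans (hωK 0)]
  obtain ⟨M, hM⟩ := hb
  refine ⟨M • (2 * K), fun n m => ?_⟩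
  rcases Nat.eq_zero_or_pos n with rfl | hn
  · simpa using nsmul_nonneg hK₀ M
  obtain ⟨T, hTcard, hT⟩ := hM n hn
  have hstep : ∀ k, |∑ i ∈ range n, ω (k + 1 + i) - ∑ i ∈ range n, ω (k + i)| ≤ 2 * K := by
    intro k
    rw [sum_range_shift_succ_sub]
    linarith [abs_sub (ω (k + n)) (ω k), hωK (k + n), hωK k]
  have hwalk := abs_sub_le_card_nsmul_of_forall_mem (fun k => ∑ i ∈ range n, ω (k + i)) hstep
    (fun k => hT _ (Factor.map_range ω n k) (by simp)) m
  simp only [zero_add] at hwalk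
  exact hwalk.trans (nsmul_le_nsmul_left hK₀ hTcard)

end BoundedAddComplexity

theorem HasSlope.eventually_abs_wordSlope_sub_lt {ω : ℕ → ℤ} {L : ℝ} (hs : HasSlope ω L)
    (hb : BoundedAddComplexity ω) {ε : ℝ} (hε : 0 < ε) :
    ∀ᶠ n in atTop, ∀ B, Factor ω B → B.length = n → |(wordSlope B : ℝ) - L| < ε := by
  obtain ⟨C, hC⟩ := hb.exists_abs_sum_shift_sub_sum_le
  have hCn : ∀ᶠ n : ℕ in atTop, (C : ℝ) / n < ε / 2 :=
    (tendsto_const_div_atTop_nhds_zero_nat (C : ℝ)).eventually (gt_mem_nhds (half_pos hε))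
  have hLn : ∀ᶠ n : ℕ in atTop, |(∑ i ∈ range n, (ω i : ℝ)) / n - L| < ε / 2 := by
    simpa only [Real.dist_eq] using Metric.tendsto_nhds.mp hs _ (half_pos hε)
  filter_upwards [hCn, hLn, eventually_gt_atTop 0] with n hCn hLn hn B hB hBn
  obtain ⟨m, hm⟩ := hB.sum_eq
  have hwin : |(B.sum : ℝ) - ∑ i ∈ range n, (ω i : ℝ)| ≤ C := by
    rw [hm, hBn]
    exact_mod_cast hC n m
  have hnpos : (0 : ℝ) < n := Nat.cast_pos.mpr hn
  have hslope : |(wordSlope B : ℝ) - (∑ i ∈ range n, (ω i : ℝ)) / n| ≤ C / n := by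
    rw [wordSlope, Rat.cast_div, Rat.cast_intCast, Rat.cast_natCast, hBn, ← sub_div, abs_div,
      abs_of_pos hnpos]
    exact div_le_div_of_nonneg_right hwin hnpos.le
  calc |(wordSlope B : ℝ) - L|
      ≤ |(wordSlope B : ℝ) - (∑ i ∈ range n, (ω i : ℝ)) / n|
        + |(∑ i ∈ range n, (ω i : ℝ)) / n - L| := abs_sub_le _ _ _
    _ < ε / 2 + ε / 2 := add_lt_add_of_le_of_lt (hslope.trans hCn.le) hLn
    _ = ε := add_halves ε

theorem stmt3_general (ω₁ ω₂ : ℕ → ℤ)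
    (hb1 : BoundedAddComplexity ω₁) (hb2 : BoundedAddComplexity ω₂)
    (L₁ L₂ : ℝ) (hs1 : HasSlope ω₁ L₁) (hs2 : HasSlope ω₂ L₂) (hne : L₁ ≠ L₂) :
    {B : List ℤ | Factor ω₁ B ∧ Factor ω₂ B}.Finite := by
  have hε : 0 < |L₁ - L₂| / 2 := half_pos (abs_pos.mpr (sub_ne_zero.mpr hne))
  obtain ⟨N, hN⟩ := eventually_atTop.mp
    ((hs1.eventually_abs_wordSlope_sub_lt hb1 hε).and (hs2.eventually_abs_wordSlope_sub_lt hb2 hε))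
  refine (List.finite_setOf_forall_mem_length_lt hb1.finite_range N).subset ?_
  rintro B ⟨hB₁, hB₂⟩
  refine ⟨fun x hx => hB₁.mem_range hx, lt_of_not_ge fun hlen => ?_⟩
  have e₁ := (hN _ hlen).1 B hB₁ rfl
  have e₂ := (hN _ hlen).2 B hB₂ rfl
  have := abs_sub_le L₁ (wordSlope B) L₂
  rw [abs_sub_comm] at e₁
  linarith

/-- Words with bounded additive complexity and different slopes have only finitely
many common factors. -/
theorem stmt3 (ω₁ ω₂ : ℕ → ℤ)
    (h1 : (Set.range ω₁).Finite) (h2 : (Set.range ω₂).Finite)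
    (hb1 : BoundedAddComplexity ω₁) (hb2 : BoundedAddComplexity ω₂)
    (L₁ L₂ : ℝ) (hs1 : HasSlope ω₁ L₁) (hs2 : HasSlope ω₂ L₂) (hne : L₁ ≠ L₂) :
    {B : List ℤ | Factor ω₁ B ∧ Factor ω₂ B}.Finite :=
  stmt3_general ω₁ ω₂ hb1 hb2 L₁ L₂ hs1 hs2 hne
end

section
/- Let ω be an infinite word over a finite integer alphabet with bounded additive complexity, and suppose slope(ω) = p/q where p and q ≥ 1 are relatively prime integers. Then there exists K ∈ ℕ such that every additive k-power that is a factor of ω with k ≥ K has slope p/q. -/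
/-- `W` is an additive `k`-power: a concatenation of `k` nonempty blocks of equal
length and equal sum. -/
def AdditivePower (k : ℕ) (W : List ℤ) : Prop :=
  ∃ L : List (List ℤ), L.length = k ∧ W = L.flatten ∧
    ∃ l : ℕ, 1 ≤ l ∧ ∃ s : ℤ, ∀ B ∈ L, B.length = l ∧ B.sum = s

/-!
Over a finite alphabet with `|ω i| ≤ A`, the sums of consecutive length-`n` factors differ by at
most `2A`. Bounded additive complexity says these sums take at most `M` values, so the set of values
has no gap wider than `2A` and spans at most `2A(M - 1)`; tiling long prefixes by length-`n`
factors shows that `n · slope(ω)` lies in this span. Hence every factor `B` satisfies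
`|ΣB - |B| · p/q| ≤ C` for a constant `C`. An additive `k`-power with blocks of length `l` and
sum `s` gives `k |s - l p/q| ≤ C`, and `s - l p/q` is either `0` or at least `1/q` in absolute
value, so `k > C q` forces `s/l = p/q`.
-/

open Finset Filter Topology

section BoundedSteps

theorem exists_not_iff_succ {P : ℕ → Prop} {a b : ℕ} (ha : ¬P a) (hb : P b) :
    ∃ m, ¬(P m ↔ P (m + 1)) := by
  by_contra! h
  have hconst : ∀ m, P m ↔ P 0 := fun m => by
    induction m with
    | zero => rfl
    | succ m ih => exact (h m).symm.trans ih
  exact ha ((hconst a).2 ((hconst b).1 hb))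

variable {f : ℕ → ℤ} {d : ℤ}

theorem exists_mem_Ioc_of_abs_sub_succ_le (hstep : ∀ m, |f (m + 1) - f m| ≤ d) {a b : ℕ} {c : ℤ}
    (ha : f a ≤ c) (hb : c < f b) : ∃ m, f m ∈ Set.Ioc c (c + d) := by
  obtain ⟨m, hm⟩ := exists_not_iff_succ (P := fun m => c < f m) (not_lt.2 ha) hb
  have hstep_m := abs_le.1 (hstep m)
  by_cases h : c < f m
  · have hnext : f (m + 1) ≤ c := not_lt.1 fun h' => hm (iff_of_true h h')
    exact ⟨m, h, by linarith⟩
  · exact ⟨m + 1, not_not.1 fun h' => hm (iff_of_false h h'), by linarith⟩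

theorem Finset.sub_le_mul_card_sub_one {S : Finset ℤ} (hd : 0 ≤ d)
    (hgap : ∀ v ∈ S, ∀ w ∈ S, v < w → ∃ u ∈ S, v < u ∧ u ≤ v + d) :
    ∀ x ∈ S, ∀ y ∈ S, y - x ≤ d * (#S - 1) := by
  induction S using Finset.strongInduction with
  | H S ih =>
  intro x hx y hy
  rcases le_or_gt y x with hyx | hxy
  · have : (1 : ℤ) ≤ #S := by exact_mod_cast card_pos.2 ⟨x, hx⟩
    nlinarith
  obtain ⟨u, hu, hxu, hux⟩ := hgap x hx y hy hxy
  set S' := S.filter (x < ·)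
  have hgap' : ∀ v ∈ S', ∀ w ∈ S', v < w → ∃ u ∈ S', v < u ∧ u ≤ v + d := by
    intro v hv w hw hvw
    rw [mem_filter] at hv hw
    obtain ⟨u, hu, hvu, huv⟩ := hgap v hv.1 w hw.1 hvw
    exact ⟨u, mem_filter.2 ⟨hu, hv.2.trans hvu⟩, hvu, huv⟩
  have hssub : S' ⊂ S := filter_ssubset.2 ⟨x, hx, lt_irrefl x⟩
  have hcard : (#S' : ℤ) + 1 ≤ #S := by exact_mod_cast card_lt_card hssub
  have := ih _ hssub hgap' u (mem_filter.2 ⟨hu, hxu⟩) y (mem_filter.2 ⟨hy, hxy⟩)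
  nlinarith

theorem sub_le_of_abs_sub_succ_le (hd : 0 ≤ d) (hstep : ∀ m, |f (m + 1) - f m| ≤ d)
    {T : Finset ℤ} (hT : ∀ m, f m ∈ T) (a b : ℕ) : f b - f a ≤ d * (#T - 1) := by
  classical
  set S := T.filter (· ∈ Set.range f)
  have hS : ∀ m, f m ∈ S := fun m => mem_filter.2 ⟨hT m, m, rfl⟩
  have hgap : ∀ v ∈ S, ∀ w ∈ S, v < w → ∃ u ∈ S, v < u ∧ u ≤ v + d := by
    intro v hv w hw hvw
    obtain ⟨-, a', rfl⟩ := mem_filter.1 hv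
    obtain ⟨-, b', rfl⟩ := mem_filter.1 hw
    obtain ⟨m, hm⟩ := exists_mem_Ioc_of_abs_sub_succ_le hstep le_rfl hvw
    exact ⟨f m, hS m, hm⟩
  calc f b - f a ≤ d * (#S - 1) :=
        Finset.sub_le_mul_card_sub_one hd hgap _ (hS a) _ (hS b)
    _ ≤ d * (#T - 1) := by gcongr; exact filter_subset _ _

end BoundedSteps

theorem List.sum_map_range (g : ℕ → ℤ) (n : ℕ) :
    ((List.range n).map g).sum = ∑ i ∈ Finset.range n, g i := by
  rw [Finset.sum_eq_multiset_sum, Finset.range_val, Multiset.range, Multiset.map_coe,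
    Multiset.sum_coe]

section Factors

def factorSum (ω : ℕ → ℤ) (n m : ℕ) : ℤ := ∑ i ∈ range n, ω (m + i)

variable {ω : ℕ → ℤ}

theorem Factor.exists_sum_eq_factorSum {W : List ℤ} (h : Factor ω W) :
    ∃ m, W.sum = factorSum ω W.length m := by
  obtain ⟨m, hm⟩ := h
  refine ⟨m, ?_⟩
  nth_rewrite 1 [hm]
  exact List.sum_map_range _ _

theorem BoundedAddComplexity.exists_factorSum_mem (h : BoundedAddComplexity ω) :
    ∃ M : ℕ, ∀ n, 1 ≤ n → ∃ T : Finset ℤ, #T ≤ M ∧ ∀ m, factorSum ω n m ∈ T := by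
  obtain ⟨M, hM⟩ := h
  refine ⟨M, fun n hn => ?_⟩
  obtain ⟨T, hTM, hT⟩ := hM n hn
  refine ⟨T, hTM, fun m => ?_⟩
  have := hT ((List.range n).map fun i => ω (m + i)) ⟨m, by simp⟩ (by simp)
  rwa [List.sum_map_range] at this

theorem abs_factorSum_succ_sub_le {A : ℤ} (hA : ∀ i, |ω i| ≤ A) (n m : ℕ) :
    |factorSum ω n (m + 1) - factorSum ω n m| ≤ 2 * A := by
  have hshift : factorSum ω n (m + 1) - factorSum ω n m = ω (m + n) - ω m := by
    have h₁ := sum_range_succ' (fun i => ω (m + i)) n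
    have h₂ := sum_range_succ (fun i => ω (m + i)) n
    simp only [factorSum, add_right_comm m 1]
    simp only [add_zero, ← add_assoc] at h₁
    linarith
  calc |factorSum ω n (m + 1) - factorSum ω n m| ≤ |ω (m + n)| + |ω m| :=
        hshift ▸ abs_sub _ _
    _ ≤ 2 * A := by linarith [hA (m + n), hA m]

theorem sum_range_mul_eq_sum_factorSum (n k : ℕ) :
    ∑ i ∈ range (k * n), ω i = ∑ j ∈ range k, factorSum ω n (j * n) := by
  induction k with
  | zero => simp
  | succ k ih => rw [add_one_mul, sum_range_add, ih, sum_range_succ, factorSum]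

theorem HasSlope.tendsto_sum_range_mul_div {L : ℝ} (hs : HasSlope ω L) {n : ℕ} (hn : 1 ≤ n) :
    Tendsto (fun k : ℕ => (∑ i ∈ range (k * n), (ω i : ℝ)) / k) atTop (𝓝 (n * L)) := by
  have hkn : Tendsto (fun k : ℕ => k * n) atTop atTop := tendsto_id.atTop_mul_const' hn
  refine ((hs.comp hkn).const_mul (n : ℝ)).congr' ?_
  filter_upwards [eventually_gt_atTop 0] with k hk
  simp only [Function.comp, Nat.cast_mul]
  field_simp

theorem HasSlope.mul_mem_Icc {L : ℝ} (hs : HasSlope ω L) {n : ℕ} (hn : 1 ≤ n) {c c' : ℤ}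
    (hlo : ∀ m, c ≤ factorSum ω n m) (hhi : ∀ m, factorSum ω n m ≤ c') :
    n * L ∈ Set.Icc (c : ℝ) c' := by
  have hsum (k : ℕ) : (∑ i ∈ range (k * n), (ω i : ℝ)) =
      ((∑ j ∈ range k, factorSum ω n (j * n) : ℤ) : ℝ) := by
    rw [← sum_range_mul_eq_sum_factorSum]; push_cast; rfl
  constructor
  · refine ge_of_tendsto (hs.tendsto_sum_range_mul_div hn) ?_
    filter_upwards [eventually_gt_atTop 0] with k hk
    have := card_nsmul_le_sum (range k) _ c fun j _ => hlo (j * n)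
    rw [le_div_iff₀ (by positivity), hsum]
    simpa [mul_comm] using (Int.cast_le (R := ℝ)).2 this
  · refine le_of_tendsto (hs.tendsto_sum_range_mul_div hn) ?_
    filter_upwards [eventually_gt_atTop 0] with k hk
    have := sum_le_card_nsmul (range k) _ c' fun j _ => hhi (j * n)
    rw [div_le_iff₀ (by positivity), hsum]
    simpa [mul_comm] using (Int.cast_le (R := ℝ)).2 this

theorem exists_abs_factorSum_sub_le (hfin : (Set.range ω).Finite) (hb : BoundedAddComplexity ω)
    {L : ℝ} (hs : HasSlope ω L) :
    ∃ C : ℝ, ∀ n, 1 ≤ n → ∀ m, |(factorSum ω n m : ℝ) - n * L| ≤ C := by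
  obtain ⟨A, hA⟩ := (hfin.image abs).bddAbove
  have hωA : ∀ i, |ω i| ≤ A := fun i => hA (Set.mem_image_of_mem _ (Set.mem_range_self i))
  have hA0 : 0 ≤ A := (abs_nonneg _).trans (hωA 0)
  obtain ⟨M, hM⟩ := hb.exists_factorSum_mem
  refine ⟨2 * A * (M - 1), fun n hn m => ?_⟩
  obtain ⟨T, hTM, hT⟩ := hM n hn
  have hspan (a b : ℕ) : (factorSum ω n b : ℝ) - factorSum ω n a ≤ 2 * A * (M - 1) := by
    have hTM' : (#T : ℤ) ≤ M := by exact_mod_cast hTM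
    have := sub_le_of_abs_sub_succ_le (by linarith) (abs_factorSum_succ_sub_le hωA n) hT a b
    have hspanℤ : factorSum ω n b - factorSum ω n a ≤ 2 * A * ((M : ℤ) - 1) :=
      this.trans (by nlinarith)
    exact_mod_cast hspanℤ
  have hrange : (Set.range (factorSum ω n)).Finite :=
    T.finite_toSet.subset (Set.range_subset_iff.2 hT)
  obtain ⟨_, ⟨m₁, rfl⟩, h₁⟩ := Set.exists_min_image _ id hrange (Set.range_nonempty _)
  obtain ⟨_, ⟨m₂, rfl⟩, h₂⟩ := Set.exists_max_image _ id hrange (Set.range_nonempty _)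
  obtain ⟨hlo, hhi⟩ := hs.mul_mem_Icc hn (c := factorSum ω n m₁) (c' := factorSum ω n m₂)
    (fun m => h₁ _ ⟨m, rfl⟩) (fun m => h₂ _ ⟨m, rfl⟩)
  rw [abs_le]
  constructor <;> linarith [hspan m₁ m, hspan m m₂]

end Factors

theorem AdditivePower.exists_length_sum {k : ℕ} {W : List ℤ} (h : AdditivePower k W) :
    ∃ l s, 1 ≤ l ∧ W.length = k * l ∧ W.sum = k * s := by
  obtain ⟨L, rfl, rfl, l, hl, s, hB⟩ := h
  refine ⟨l, s, hl, ?_⟩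
  simp [List.length_flatten, List.sum_flatten, List.map_congr_left (fun B hB' => (hB B hB').1),
    List.map_congr_left (fun B hB' => (hB B hB').2)]

theorem mul_eq_mul_of_mul_abs_sub_le {s l p q : ℤ} (hq : 0 < q) {k : ℕ} {C : ℝ}
    (hk : C * q < k) (h : k * |(s : ℝ) - l * (p / q)| ≤ C) : s * q = l * p := by
  by_contra hne
  have hone : (1 : ℝ) ≤ |((s * q - l * p : ℤ) : ℝ)| := by
    exact_mod_cast Int.one_le_abs (sub_ne_zero.2 hne)
  have hq' : (0 : ℝ) < q := by exact_mod_cast hq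
  have hscale : |((s * q - l * p : ℤ) : ℝ)| = |(s : ℝ) - l * (p / q)| * q := by
    rw [← abs_of_pos hq', ← abs_mul, abs_of_pos hq']
    push_cast
    field_simp
  have : (k : ℝ) ≤ C * q := by nlinarith
  linarith

theorem stmt4_general (ω : ℕ → ℤ) (hfin : (Set.range ω).Finite)
    (hb : BoundedAddComplexity ω) (p q : ℤ) (hq : 1 ≤ q)
    (hs : HasSlope ω ((p : ℝ) / (q : ℝ))) :
    ∃ K : ℕ, ∀ k : ℕ, K ≤ k → ∀ W : List ℤ, Factor ω W → AdditivePower k W →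
      wordSlope W = (p : ℚ) / (q : ℚ) := by
  obtain ⟨C, hC⟩ := exists_abs_factorSum_sub_le hfin hb hs
  refine ⟨⌊C * q⌋₊ + 1, fun k hk W hW hpow => ?_⟩
  obtain ⟨l, s, hl, hlen, hsum⟩ := hpow.exists_length_sum
  obtain ⟨m, hm⟩ := hW.exists_sum_eq_factorSum
  have hk1 : 1 ≤ k := le_of_add_le_right hk
  have hdisc := hC W.length (hlen ▸ Nat.one_le_iff_ne_zero.2 (by positivity)) m
  rw [← hm, hsum, hlen] at hdisc
  have hsq : s * q = l * p := by
    refine mul_eq_mul_of_mul_abs_sub_le (zero_lt_one.trans_le hq) ?_ ?_ (k := k) (C := C)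
    · exact (Nat.lt_floor_add_one _).trans_le (by exact_mod_cast hk)
    · calc (k : ℝ) * |(s : ℝ) - l * (p / q)|
          = |((k * s : ℤ) : ℝ) - ((k * l : ℕ) : ℝ) * (p / q)| := by
            rw [← abs_of_nonneg (Nat.cast_nonneg (α := ℝ) k), ← abs_mul]
            push_cast
            ring_nf
        _ ≤ C := hdisc
  have hq0 : (q : ℚ) ≠ 0 := by exact_mod_cast (by omega : q ≠ 0)
  rw [wordSlope, hsum, hlen, div_eq_div_iff (by positivity) hq0]
  push_cast
  linear_combination (k : ℚ) * (by exact_mod_cast hsq : (s : ℚ) * q = l * p)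

/-- If ω has bounded additive complexity and rational slope p/q, then all additive
k-powers in ω for large enough k have slope p/q. -/
theorem stmt4 (ω : ℕ → ℤ) (hfin : (Set.range ω).Finite)
    (hb : BoundedAddComplexity ω) (p q : ℤ) (hq : 1 ≤ q) (hpq : IsCoprime p q)
    (hs : HasSlope ω ((p : ℝ) / (q : ℝ))) :
    ∃ K : ℕ, ∀ k : ℕ, K ≤ k → ∀ W : List ℤ, Factor ω W → AdditivePower k W →
      wordSlope W = (p : ℚ) / (q : ℚ) :=
  stmt4_general ω hfin hb p q hq hs
end

section
/- Let ω be an infinite word over a finite integer alphabet with bounded additive complexity (so slope(ω) exists). Then slope(ω) is a rational number if and only if there exists an infinite set C of nonempty factors of ω such that any two members of C have equal slope. -/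
open Finset Filter Topology

theorem sub_le_mul_card_of_step_le {g : ℕ → ℤ} {c : ℤ} (hc : 0 ≤ c)
    (hstep : ∀ i, g (i + 1) ≤ g i + c) {T : Finset ℤ} (hT : ∀ i, g i ∈ T) (k : ℕ) :
    g k - g 0 ≤ c * #T := by
  -- `v` bounds `g` on `[0, k]`, and each new record raises `v` by at most `c` while passing a
  -- new element of `T`.
  have key : ∀ k, ∃ v, (∀ i ≤ k, g i ≤ v) ∧ v ≤ g 0 + c * #{x ∈ T | g 0 < x ∧ x ≤ v} := by
    intro k
    induction k with
    | zero => exact ⟨g 0, fun i hi => by rw [Nat.le_zero.1 hi],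
        le_add_of_nonneg_right (by positivity)⟩
    | succ k ih =>
      obtain ⟨v, hgv, hv⟩ := ih
      by_cases hrec : g (k + 1) ≤ v
      · refine ⟨v, fun i hi => ?_, hv⟩
        rcases Nat.le_succ_iff.1 hi with hi | rfl
        exacts [hgv i hi, hrec]
      push Not at hrec
      refine ⟨g (k + 1), fun i hi => ?_, ?_⟩
      · rcases Nat.le_succ_iff.1 hi with hi | rfl
        exacts [(hgv i hi).trans hrec.le, le_rfl]
      have hsub : insert (g (k + 1)) {x ∈ T | g 0 < x ∧ x ≤ v} ⊆
          {x ∈ T | g 0 < x ∧ x ≤ g (k + 1)} := by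
        intro x hx
        rcases mem_insert.1 hx with rfl | hx
        · exact mem_filter.2 ⟨hT _, (hgv 0 k.zero_le).trans_lt hrec, le_rfl⟩
        · rw [mem_filter] at hx ⊢
          exact ⟨hx.1, hx.2.1, hx.2.2.trans hrec.le⟩
      have hcard := card_le_card hsub
      rw [card_insert_of_notMem fun h => (mem_filter.1 h).2.2.not_gt hrec] at hcard
      have hcard' : c * (#{x ∈ T | g 0 < x ∧ x ≤ v} + 1 : ℕ) ≤
          c * #{x ∈ T | g 0 < x ∧ x ≤ g (k + 1)} := by gcongr
      push_cast at hcard'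
      linarith [hstep k, hgv k le_rfl]
  obtain ⟨v, hgv, hv⟩ := key k
  have : c * #{x ∈ T | g 0 < x ∧ x ≤ v} ≤ c * #T := by gcongr; exact filter_subset _ _
  linarith [hgv k le_rfl]

theorem abs_sub_le_mul_card_of_abs_step_le {g : ℕ → ℤ} {c : ℤ}
    (hstep : ∀ i, |g (i + 1) - g i| ≤ c) {T : Finset ℤ} (hT : ∀ i, g i ∈ T) (k : ℕ) :
    |g k - g 0| ≤ c * #T := by
  have hc : 0 ≤ c := (abs_nonneg _).trans (hstep 0)
  rw [abs_le]
  constructor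
  · have := sub_le_mul_card_of_step_le (g := fun i => -g i) hc
      (fun i => by linarith [(abs_le.1 (hstep i)).1]) (T := T.image Neg.neg)
      (fun i => mem_image_of_mem _ (hT i)) k
    rw [card_image_of_injective _ neg_injective] at this
    linarith
  · exact sub_le_mul_card_of_step_le hc (fun i => by linarith [(abs_le.1 (hstep i)).2]) hT k

theorem Set.Finite.exists_infinite_fiber {α β : Type*} [Infinite α] {f : α → β}
    (hf : (Set.range f).Finite) : ∃ b, (f ⁻¹' {b}).Infinite := by
  by_contra! h
  apply Set.infinite_univ (α := α)
  rw [← Set.preimage_range f, ← Set.biUnion_preimage_singleton]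
  exact hf.biUnion fun b _ => h b

section Word

variable {ω : ℕ → ℤ}

variable (ω) in
def factorAt (m n : ℕ) : List ℤ := (List.range n).map fun i => ω (m + i)

variable (ω) in
def blockSum (m n : ℕ) : ℤ := ∑ i ∈ range n, ω (m + i)

theorem factor_factorAt (m n : ℕ) : Factor ω (factorAt ω m n) := ⟨m, by simp [factorAt]⟩

@[simp]
theorem length_factorAt (m n : ℕ) : (factorAt ω m n).length = n := by simp [factorAt]

theorem sum_factorAt (m n : ℕ) : (factorAt ω m n).sum = blockSum ω m n := rfl

theorem blockSum_add (m n n' : ℕ) :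
    blockSum ω m (n + n') = blockSum ω m n + blockSum ω (m + n) n' := by
  simp only [blockSum, sum_range_add, add_assoc]

theorem blockSum_succ_sub (m n : ℕ) :
    blockSum ω (m + 1) n - blockSum ω m n = ω (m + n) - ω m := by
  have h₁ := blockSum_add (ω := ω) m n 1
  have h₂ := blockSum_add (ω := ω) m 1 n
  rw [add_comm n 1] at h₁
  simp only [blockSum, sum_range_one, add_zero] at h₁ h₂ ⊢
  linarith

theorem BoundedAddComplexity.exists_abs_blockSum_sub_le (hfin : (Set.range ω).Finite)
    (hb : BoundedAddComplexity ω) : ∃ D : ℤ, ∀ n m m', |blockSum ω m n - blockSum ω m' n| ≤ D := by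
  obtain ⟨M, hM⟩ := hb
  obtain ⟨A, hA⟩ : ∃ A, ∀ i, |ω i| ≤ A := by
    obtain ⟨A, hA⟩ := (hfin.image (|·|)).bddAbove
    exact ⟨A, fun i => hA ⟨ω i, Set.mem_range_self i, rfl⟩⟩
  have hA₀ : 0 ≤ A := (abs_nonneg _).trans (hA 0)
  refine ⟨2 * (2 * A * M), fun n m m' => ?_⟩
  rcases Nat.eq_zero_or_pos n with rfl | hn
  · simp only [blockSum, range_zero, sum_empty, sub_zero, abs_zero]
    positivity
  obtain ⟨T, hTM, hT⟩ := hM n hn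
  have hstep : ∀ i, |blockSum ω (i + 1) n - blockSum ω i n| ≤ 2 * A := fun i => by
    rw [blockSum_succ_sub]
    linarith [abs_sub (ω (i + n)) (ω i), hA (i + n), hA i]
  have hmem : ∀ i, blockSum ω i n ∈ T := fun i => by
    simpa only [sum_factorAt] using hT _ (factor_factorAt i n) (length_factorAt i n)
  have hspread : ∀ i, |blockSum ω i n - blockSum ω 0 n| ≤ 2 * A * M := fun i =>
    (abs_sub_le_mul_card_of_abs_step_le (g := (blockSum ω · n)) hstep hmem i).trans
      (mul_le_mul_of_nonneg_left (by exact_mod_cast hTM) (by positivity))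
  linarith [abs_sub_le (blockSum ω m n) (blockSum ω 0 n) (blockSum ω m' n),
    abs_sub_comm (blockSum ω 0 n) (blockSum ω m' n), hspread m, hspread m']

theorem HasSlope.tendsto_blockSum_mul_div {L : ℝ} (hs : HasSlope ω L) {n : ℕ} (hn : 0 < n) :
    Tendsto (fun k : ℕ => (blockSum ω 0 (k * n) : ℝ) / k) atTop (𝓝 (n * L)) := by
  have hkn : Tendsto (fun k : ℕ => k * n) atTop atTop := tendsto_id.atTop_mul_const' hn
  refine ((hs.comp hkn).const_mul (n : ℝ)).congr' ?_
  filter_upwards [eventually_gt_atTop 0] with k hk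
  simp only [Function.comp_apply, blockSum, zero_add, Nat.cast_mul, Int.cast_sum]
  field_simp

theorem HasSlope.abs_blockSum_sub_le {L : ℝ} (hs : HasSlope ω L) {D : ℤ}
    (hD : ∀ n m m', |blockSum ω m n - blockSum ω m' n| ≤ D) (n m : ℕ) :
    |(blockSum ω m n : ℝ) - n * L| ≤ D := by
  rcases Nat.eq_zero_or_pos n with rfl | hn
  · simpa [blockSum] using hD 0 0 0
  set x := blockSum ω m n
  have hblocks : ∀ k : ℕ, |blockSum ω 0 (k * n) - k * x| ≤ k * D := by
    intro k
    induction k with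
    | zero => simp [blockSum]
    | succ k ih =>
      rw [Nat.succ_mul, blockSum_add, zero_add]
      have := hD n (k * n) m
      rw [abs_le] at this ih ⊢
      push_cast
      constructor <;> linarith
  have hlim := ((hs.tendsto_blockSum_mul_div hn).sub_const (x : ℝ)).abs
  rw [abs_sub_comm]
  refine le_of_tendsto hlim ?_
  filter_upwards [eventually_gt_atTop 0] with k hk
  have hk' : (0 : ℝ) < k := by exact_mod_cast hk
  rw [div_sub' hk'.ne', abs_div, abs_of_pos hk', div_le_iff₀ hk', mul_comm (D : ℝ)]
  exact_mod_cast hblocks k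

theorem Factor.abs_sum_sub_le {L : ℝ} {D : ℤ} (hdev : ∀ n m, |(blockSum ω m n : ℝ) - n * L| ≤ D)
    {B : List ℤ} (hB : Factor ω B) : |(B.sum : ℝ) - B.length * L| ≤ D := by
  obtain ⟨m, hm : B = factorAt ω m B.length⟩ := hB
  have := hdev B.length m
  rwa [← sum_factorAt, ← hm] at this

theorem finite_setOf_factor_length_le (hfin : (Set.range ω).Finite) (N : ℕ) :
    {B | Factor ω B ∧ B.length ≤ N}.Finite := by
  have := hfin.to_subtype
  refine ((List.finite_length_le (Set.range ω) N).image (List.map Subtype.val)).subset ?_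
  rintro B ⟨⟨m, hm⟩, hN⟩
  refine ⟨(List.range B.length).map fun i => ⟨ω (m + i), Set.mem_range_self _⟩, ?_, ?_⟩
  · simpa using hN
  · rw [List.map_map]
    exact hm.symm

theorem Set.Infinite.exists_factor_length_gt (hfin : (Set.range ω).Finite) {C : Set (List ℤ)}
    (hC : C.Infinite) (hfac : ∀ B ∈ C, Factor ω B) (N : ℕ) : ∃ B ∈ C, N < B.length := by
  by_contra! h
  exact hC ((finite_setOf_factor_length_le hfin N).subset fun B hB => ⟨hfac B hB, h B hB⟩)

theorem wordSlope_eq_of_sum_eq {α : ℚ} {B : List ℤ} {d : ℕ} (hd : d ≠ 0)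
    (hsum : B.sum = α.num * d) (hlen : B.length = α.den * d) : wordSlope B = α := by
  have hd' : (d : ℚ) ≠ 0 := by exact_mod_cast hd
  rw [wordSlope, hsum, hlen]
  push_cast
  rw [mul_div_mul_right _ _ hd', Rat.num_div_den]

theorem exists_factor_wordSlope_eq_length_gt {L : ℝ} {D : ℤ}
    (hdev : ∀ n m, |(blockSum ω m n : ℝ) - n * L| ≤ D) {α : ℚ} (hα : (α : ℝ) = L) (N : ℕ) :
    ∃ B, Factor ω B ∧ wordSlope B = α ∧ N < B.length := by
  set e : ℕ → ℤ := fun k => blockSum ω 0 (α.den * k) - α.num * k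
  have he : ∀ k, e k ∈ Set.Icc (-D) D := by
    intro k
    have hL : ((α.den * k : ℕ) : ℝ) * L = ((α.num * k : ℤ) : ℝ) := by
      rw [← hα, Rat.cast_def]
      push_cast
      field_simp
    have := hdev (α.den * k) 0
    rw [hL, ← Int.cast_sub, ← Int.cast_abs, Int.cast_le] at this
    exact abs_le.1 this
  obtain ⟨v, hv⟩ :=
    ((Set.finite_Icc (-D) D).subset (Set.range_subset_iff.2 he)).exists_infinite_fiber
  obtain ⟨k₀, hk₀ : e k₀ = v⟩ := hv.nonempty
  obtain ⟨k, hk : e k = v, hlt⟩ := hv.exists_gt (k₀ + N)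
  obtain ⟨d, rfl⟩ : ∃ d, k = k₀ + d := ⟨k - k₀, by omega⟩
  refine ⟨factorAt ω (α.den * k₀) (α.den * d), factor_factorAt _ _,
    wordSlope_eq_of_sum_eq (d := d) (by omega) ?_ (length_factorAt _ _), ?_⟩
  · have hsplit := blockSum_add (ω := ω) 0 (α.den * k₀) (α.den * d)
    rw [← mul_add, zero_add] at hsplit
    simp only [e] at hk₀ hk
    push_cast at hk
    rw [sum_factorAt]
    linear_combination hk - hk₀ - hsplit
  · rw [length_factorAt]
    exact (show N < d by omega).trans_le (Nat.le_mul_of_pos_left d α.pos)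

theorem eq_of_forall_exists_factor_wordSlope_eq {L : ℝ} {D : ℤ}
    (hdev : ∀ n m, |(blockSum ω m n : ℝ) - n * L| ≤ D) {α : ℚ}
    (h : ∀ N : ℕ, ∃ B, Factor ω B ∧ wordSlope B = α ∧ N < B.length) : (α : ℝ) = L := by
  by_contra hne
  have hε : 0 < |(α : ℝ) - L| := abs_pos.2 (sub_ne_zero.2 hne)
  obtain ⟨N, hN⟩ := exists_nat_gt ((D : ℝ) / |(α : ℝ) - L|)
  obtain ⟨B, hB, hslope, hlen⟩ := h N
  have hlen' : (N : ℝ) < B.length := by exact_mod_cast hlen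
  have hsum : (B.sum : ℝ) = α * B.length := by
    have hpos : (B.length : ℚ) ≠ 0 := by exact_mod_cast (N.zero_le.trans_lt hlen).ne'
    have hq : (B.sum : ℚ) = α * B.length := by rw [← hslope, wordSlope, div_mul_cancel₀ _ hpos]
    have := congrArg (Rat.cast : ℚ → ℝ) hq
    rwa [Rat.cast_intCast, Rat.cast_mul, Rat.cast_natCast] at this
  have hdevB := hB.abs_sum_sub_le hdev
  rw [hsum, mul_comm _ L, ← sub_mul, abs_mul, Nat.abs_cast] at hdevB
  rw [div_lt_iff₀ hε] at hN
  nlinarith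

end Word

/-- For ω with bounded additive complexity, the slope is rational iff there is an
infinite collection of nonempty factors all having the same slope. -/
theorem stmt5 (ω : ℕ → ℤ) (hfin : (Set.range ω).Finite)
    (hb : BoundedAddComplexity ω) (L : ℝ) (hs : HasSlope ω L) :
    (∃ α : ℚ, (α : ℝ) = L) ↔
      ∃ C : Set (List ℤ), C.Infinite ∧ (∀ B ∈ C, Factor ω B ∧ B ≠ []) ∧
        ∀ B ∈ C, ∀ B' ∈ C, wordSlope B = wordSlope B' := by
  obtain ⟨D, hD⟩ := hb.exists_abs_blockSum_sub_le hfin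
  have hdev := hs.abs_blockSum_sub_le hD
  constructor
  · rintro ⟨α, hα⟩
    refine ⟨{B | Factor ω B ∧ wordSlope B = α ∧ B ≠ []}, ?_, fun B hB => ⟨hB.1, hB.2.2⟩,
      fun B hB B' hB' => hB.2.1.trans hB'.2.1.symm⟩
    refine Set.Infinite.of_image List.length (Set.infinite_of_forall_exists_gt fun N => ?_)
    obtain ⟨B, hB, hslope, hN⟩ := exists_factor_wordSlope_eq_length_gt hdev hα N
    exact ⟨B.length,
      ⟨B, ⟨hB, hslope, List.ne_nil_of_length_pos (N.zero_le.trans_lt hN)⟩, rfl⟩, hN⟩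
  · rintro ⟨C, hC, hfac, hslope⟩
    obtain ⟨B₀, hB₀⟩ := hC.nonempty
    refine ⟨wordSlope B₀, eq_of_forall_exists_factor_wordSlope_eq hdev fun N => ?_⟩
    obtain ⟨B, hB, hN⟩ := hC.exists_factor_length_gt hfin (fun B hB => (hfac B hB).1) N
    exact ⟨B, (hfac B hB).1, hslope B hB B₀ hB₀, hN⟩
end

section
/- Let ω be an infinite word over a finite integer alphabet with bounded additive complexity (so slope(ω) exists). Then slope(ω) is rational if and only if there exists a strictly increasing sequence of natural numbers n₀ < n₁ < n₂ < ⋯ such that all of the consecutive blocks B_i = (ω(n_{i−1}), ω(n_{i−1}+1), …, ω(n_i − 1)), i ≥ 1, have the same slope. Moreover, in that case the common slope of the blocks equals slope(ω). -/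
/-- The block of ω on positions `a, a+1, …, b-1`. -/
def seg (ω : ℕ → ℤ) (a b : ℕ) : List ℤ := (List.range (b - a)).map (fun j => ω (a + j))

open Filter Topology Finset

def prefixSum (ω : ℕ → ℤ) (n : ℕ) : ℤ := ∑ i ∈ range n, ω i

section Walk

variable {w : ℕ → ℤ} {K : ℤ}

theorem exists_mem_Ico_of_abs_sub_le (hstep : ∀ j, |w (j + 1) - w j| ≤ K) {a b : ℕ} {t : ℤ}
    (ha : w a ≤ t) (hb : t < w b) : ∃ j, t ∈ Ico (w j) (w j + K) := by
  obtain ⟨j, hj⟩ : ∃ j, ¬(w j ≤ t ↔ w (j + 1) ≤ t) := by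
    by_contra! h
    have hconst : ∀ j, w j ≤ t ↔ w 0 ≤ t := fun j =>
      Nat.rec Iff.rfl (fun j ih => (h j).symm.trans ih) j
    exact hb.not_ge ((hconst b).2 ((hconst a).1 ha))
  have := abs_le.mp (hstep j)
  by_cases hj' : w j ≤ t
  · exact ⟨j, by simp only [mem_Ico]; omega⟩
  · exact ⟨j + 1, by simp only [mem_Ico]; omega⟩

theorem sub_le_mul_card_of_abs_sub_le (hstep : ∀ j, |w (j + 1) - w j| ≤ K) {T : Finset ℤ}
    (hT : ∀ j, w j ∈ T) (a b : ℕ) : w b - w a ≤ K * #T := by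
  have hK : 0 ≤ K := (abs_nonneg _).trans (hstep 0)
  have hcover : Ico (w a) (w b) ⊆ T.biUnion fun v => Ico v (v + K) := fun t ht => by
    obtain ⟨j, hj⟩ := exists_mem_Ico_of_abs_sub_le hstep (mem_Ico.mp ht).1 (mem_Ico.mp ht).2
    exact mem_biUnion.mpr ⟨w j, hT j, hj⟩
  have hcard := (card_le_card hcover).trans card_biUnion_le
  simp only [Int.card_Ico, add_sub_cancel_left, sum_const, smul_eq_mul] at hcard
  have hcard' : (((w b - w a).toNat : ℕ) : ℤ) ≤ ((#T * K.toNat : ℕ) : ℤ) := by exact_mod_cast hcard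
  push_cast [Int.toNat_of_nonneg hK] at hcard'
  linarith [Int.self_le_toNat (w b - w a)]

end Walk

theorem abs_sub_mul_le_of_abs_add_sub_le {s : ℕ → ℝ} {C L : ℝ}
    (hs : ∀ m n, |s (m + n) - s m - s n| ≤ C) (hL : Tendsto (fun n => s n / n) atTop (𝓝 L))
    (n : ℕ) : |s n - n * L| ≤ C := by
  rcases Nat.eq_zero_or_pos n with rfl | hn
  · simpa using hs 0 0
  have hC : 0 ≤ C := (abs_nonneg _).trans (hs 0 0)
  have hnR : (0 : ℝ) < n := by exact_mod_cast hn
  have hmul : ∀ k : ℕ, |s ((k + 1) * n) - (k + 1) * s n| ≤ k * C := by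
    intro k
    induction k with
    | zero => simp
    | succ k ih =>
      rw [show (k + 1 + 1) * n = (k + 1) * n + n by ring]
      calc |s ((k + 1) * n + n) - (↑(k + 1) + 1) * s n|
          = |(s ((k + 1) * n + n) - s ((k + 1) * n) - s n) + (s ((k + 1) * n) - (k + 1) * s n)| := by
            push_cast; ring_nf
        _ ≤ C + k * C := (abs_add_le _ _).trans (add_le_add (hs _ _) ih)
        _ = (k + 1 : ℕ) * C := by push_cast; ring
  have hbound : ∀ k : ℕ, |s ((k + 1) * n) / ((k + 1) * n : ℕ) - s n / n| ≤ C / n := by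
    intro k
    have hk : (0 : ℝ) < k + 1 := by positivity
    rw [show s ((k + 1) * n) / ((k + 1) * n : ℕ) - s n / n
        = (s ((k + 1) * n) - (k + 1) * s n) / ((k + 1) * n) by push_cast; field_simp,
      abs_div, abs_of_pos (mul_pos hk hnR), div_le_div_iff₀ (mul_pos hk hnR) hnR]
    nlinarith [hmul k]
  have hmulTop : Tendsto (fun k : ℕ => (k + 1) * n) atTop atTop :=
    tendsto_atTop_mono (fun k => (Nat.le_succ k).trans (Nat.le_mul_of_pos_right _ hn)) tendsto_id
  have hlim := ((hL.comp hmulTop).sub_const (s n / n)).abs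
  have hLn : |L - s n / n| ≤ C / n := le_of_tendsto' hlim hbound
  have hsn : s n - n * L = -(n * (L - s n / n)) := by field_simp; ring
  rwa [hsn, abs_neg, abs_mul, Nat.abs_cast, ← le_div_iff₀' hnR]

theorem exists_strictMono_sub_eq_mul_sub_of_abs_sub_mul_le {s : ℕ → ℤ} {α : ℚ} {C : ℝ}
    (h : ∀ m, |(s m : ℝ) - m * α| ≤ C) :
    ∃ n : ℕ → ℕ, StrictMono n ∧ ∀ i, (s (n (i + 1)) - s (n i) : ℚ) = α * (n (i + 1) - n i) := by
  set z : ℕ → ℤ := fun m => s m * α.den - m * α.num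
  set B := ⌈C * α.den⌉
  have hzB : ∀ m, z m ∈ Set.Icc (-B) B := by
    intro m
    have hz : (z m : ℝ) = (s m - m * α) * α.den := by
      have hnum : (α : ℝ) * α.den = α.num := by exact_mod_cast Rat.mul_den_eq_num α
      simp only [z]
      push_cast
      linear_combination (m : ℝ) * hnum
    have hzC : |(z m : ℝ)| ≤ C * α.den := by
      rw [hz, abs_mul, Nat.abs_cast]
      exact mul_le_mul_of_nonneg_right (h m) (Nat.cast_nonneg _)
    rw [Set.mem_Icc, ← abs_le]
    exact_mod_cast hzC.trans (Int.le_ceil _)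
  obtain ⟨c, hc⟩ : ∃ c, {m | z m = c}.Infinite := by
    by_contra! h
    refine Set.infinite_univ (((Set.finite_Icc (-B) B).biUnion fun c _ => h c).subset ?_)
    exact fun m _ => Set.mem_biUnion (hzB m) rfl
  refine ⟨Nat.nth (fun m => z m = c), Nat.nth_strictMono hc, fun i => ?_⟩
  have h1 := Nat.nth_mem_of_infinite hc i
  have h2 := Nat.nth_mem_of_infinite hc (i + 1)
  have hzq : (z (Nat.nth (fun m => z m = c) (i + 1)) : ℚ) = z (Nat.nth (fun m => z m = c) i) := by
    rw [h1, h2]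
  simp only [z] at hzq
  push_cast at hzq
  rw [← Rat.mul_den_eq_num] at hzq
  apply mul_right_cancel₀ (Nat.cast_ne_zero.mpr α.den_nz : (α.den : ℚ) ≠ 0)
  linear_combination hzq

theorem eq_of_tendsto_div_of_sub_eq_mul_sub {s : ℕ → ℝ} {L β : ℝ} {n : ℕ → ℕ}
    (hL : Tendsto (fun m => s m / m) atTop (𝓝 L)) (hn : StrictMono n)
    (hinc : ∀ i, s (n (i + 1)) - s (n i) = β * (n (i + 1) - n i)) : L = β := by
  have hsn : ∀ i, s (n i) = s (n 0) + β * (n i - n 0) := by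
    intro i
    induction i with
    | zero => simp
    | succ i ih => linarith [hinc i]
  have hn' := hn.tendsto_atTop
  have hβ : Tendsto (fun i => s (n i) / n i) atTop (𝓝 β) := by
    have h : Tendsto (fun i => β + (s (n 0) - β * n 0) / n i) atTop (𝓝 (β + 0)) :=
      ((tendsto_const_div_atTop_nhds_zero_nat _).comp hn').const_add β
    rw [add_zero] at h
    refine h.congr' ?_
    filter_upwards [hn'.eventually_gt_atTop 0] with i hi
    rw [hsn i]
    field_simp
    ring
  exact tendsto_nhds_unique (hL.comp hn') hβ

section Word

variable (ω : ℕ → ℤ)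

theorem prefixSum_succ (n : ℕ) : prefixSum ω (n + 1) = prefixSum ω n + ω n :=
  sum_range_succ ω n

theorem hasSlope_iff (L : ℝ) :
    HasSlope ω L ↔ Tendsto (fun n => (prefixSum ω n : ℝ) / n) atTop (𝓝 L) := by
  simp [HasSlope, prefixSum]

theorem seg_length (a b : ℕ) : (seg ω a b).length = b - a := by simp [seg]

theorem factor_seg (a b : ℕ) : Factor ω (seg ω a b) := ⟨a, by simp [seg]⟩

theorem seg_sum {a b : ℕ} (hab : a ≤ b) : (seg ω a b).sum = prefixSum ω b - prefixSum ω a := by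
  obtain ⟨k, rfl⟩ := Nat.exists_eq_add_of_le hab
  rw [prefixSum, prefixSum, sum_range_add, add_sub_cancel_left, ← sum_map_val, range_val,
    Multiset.range, Multiset.map_coe, Multiset.sum_coe, seg, Nat.add_sub_cancel_left]

theorem wordSlope_seg_eq_iff {a b : ℕ} (hab : a < b) (β : ℚ) :
    wordSlope (seg ω a b) = β ↔ (prefixSum ω b - prefixSum ω a : ℚ) = β * (b - a) := by
  rw [wordSlope, seg_sum ω hab.le, seg_length, div_eq_iff (by simp; omega), Nat.cast_sub hab.le,
    Int.cast_sub]

end Word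

theorem BoundedAddComplexity.exists_abs_prefixSum_add_sub_le {ω : ℕ → ℤ}
    (hfin : (Set.range ω).Finite) (hb : BoundedAddComplexity ω) :
    ∃ C : ℤ, ∀ m n, |prefixSum ω (m + n) - prefixSum ω m - prefixSum ω n| ≤ C := by
  obtain ⟨M, hM⟩ := hb
  obtain ⟨K, hK⟩ := (hfin.image (|·|)).bddAbove
  have hωK : ∀ i, |ω i| ≤ K := fun i => hK ⟨ω i, ⟨i, rfl⟩, rfl⟩
  have hK0 : 0 ≤ K := (abs_nonneg _).trans (hωK 0)
  refine ⟨2 * K * M, fun m n => ?_⟩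
  rcases Nat.eq_zero_or_pos n with rfl | hn
  · simpa [prefixSum] using by positivity
  obtain ⟨T, hTcard, hT⟩ := hM n hn
  set w : ℕ → ℤ := fun j => prefixSum ω (j + n) - prefixSum ω j
  have hstep : ∀ j, |w (j + 1) - w j| ≤ 2 * K := by
    intro j
    have hw : w (j + 1) - w j = ω (j + n) - ω j := by
      simp only [w, show j + 1 + n = j + n + 1 by omega, prefixSum_succ]
      ring
    rw [hw, two_mul]
    exact (abs_sub _ _).trans (add_le_add (hωK _) (hωK _))
  have hwT : ∀ j, w j ∈ T := fun j => by
    simpa [w, seg_sum ω (Nat.le_add_right j n), seg_length] using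
      hT _ (factor_seg ω j (j + n)) (by simp [seg_length])
  have hKT : 2 * K * #T ≤ 2 * K * M := by gcongr
  have h0 : w 0 = prefixSum ω n := by simp [w, prefixSum]
  rw [abs_le]
  constructor
  · linarith [sub_le_mul_card_of_abs_sub_le hstep hwT m 0]
  · linarith [sub_le_mul_card_of_abs_sub_le hstep hwT 0 m]

/-- For ω with bounded additive complexity, the slope is rational iff ω factors (after
a prefix) as consecutive blocks all of the same slope; moreover the common slope equals
the slope of ω. -/
theorem stmt8 (ω : ℕ → ℤ) (hfin : (Set.range ω).Finite)
    (hb : BoundedAddComplexity ω) (L : ℝ) (hs : HasSlope ω L) :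
    ((∃ α : ℚ, (α : ℝ) = L) ↔
      ∃ n : ℕ → ℕ, StrictMono n ∧
        ∀ i : ℕ, wordSlope (seg ω (n i) (n (i + 1))) = wordSlope (seg ω (n 0) (n 1)))
    ∧ ∀ n : ℕ → ℕ, StrictMono n →
        (∀ i : ℕ, wordSlope (seg ω (n i) (n (i + 1))) = wordSlope (seg ω (n 0) (n 1))) →
        ((wordSlope (seg ω (n 0) (n 1)) : ℝ) = L) := by
  have hS := (hasSlope_iff ω L).1 hs
  have slope_eq : ∀ n : ℕ → ℕ, StrictMono n →
      (∀ i, wordSlope (seg ω (n i) (n (i + 1))) = wordSlope (seg ω (n 0) (n 1))) →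
      (wordSlope (seg ω (n 0) (n 1)) : ℝ) = L := by
    intro n hn hslope
    refine (eq_of_tendsto_div_of_sub_eq_mul_sub hS hn fun i => ?_).symm
    have h := (wordSlope_seg_eq_iff ω (hn i.lt_succ_self) _).1 (hslope i)
    exact_mod_cast h
  refine ⟨⟨fun ⟨α, hα⟩ => ?_, fun ⟨n, hn, hslope⟩ => ⟨_, slope_eq n hn hslope⟩⟩, slope_eq⟩
  obtain ⟨C, hC⟩ := hb.exists_abs_prefixSum_add_sub_le hfin
  have hdisc : ∀ m, |(prefixSum ω m : ℝ) - m * α| ≤ C := hα ▸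
    abs_sub_mul_le_of_abs_add_sub_le (fun m n => by exact_mod_cast hC m n) hS
  obtain ⟨n, hn, hinc⟩ := exists_strictMono_sub_eq_mul_sub_of_abs_sub_mul_le hdisc
  have hslope : ∀ i, wordSlope (seg ω (n i) (n (i + 1))) = α := fun i =>
    (wordSlope_seg_eq_iff ω (hn i.lt_succ_self) α).2 (hinc i)
  exact ⟨n, hn, fun i => by rw [hslope, hslope]⟩
end

section
/- Let ω be a uniformly recurrent infinite word over a finite integer alphabet with bounded additive complexity, and suppose slope(ω) is rational. Then there exist a natural number L and a strictly increasing sequence of natural numbers n₀ < n₁ < n₂ < ⋯ with n_i − n_{i−1} ≤ L for all i ≥ 1 such that every consecutive block B_i = (ω(n_{i−1}), …, ω(n_i − 1)), i ≥ 1, is nonempty and has slope(B_i) = slope(ω). -/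
/-- ω is uniformly recurrent: every factor of length n occurs in every factor of
some length K(n). -/
def UniformlyRecurrent (ω : ℕ → ℤ) : Prop :=
  ∀ n : ℕ, ∃ K : ℕ, ∀ B C : List ℤ, Factor ω B → B.length = n →
    Factor ω C → C.length = K → B <:+: C

/-!
Bounded additive complexity makes the partial sums `S n = ω 0 + ⋯ + ω (n - 1)` quasi-additive:
for fixed `n` the window sum `S (m + n) - S m` moves in steps bounded by the diameter of the
alphabet through at most `M` values, so it stays within `M · diam` of `S n`. With slope `α`
this forces `|S n - α n| ≤ C` for every `n`, so the integer sequence `α.den * (S n - α n)` takes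
finitely many values. Let `v ≤ w` be the least and largest values it takes infinitely often;
eventually it stays in `[v, w]`. A factor along which it drops from `w` to `v` recurs, by uniform
recurrence, in every window of bounded length, and every late copy must end at `v`. Hence `v` is
hit with bounded gaps, and the block between two consecutive hits has slope exactly `α`.
-/

open Filter Topology Finset

section Seg

variable (ω : ℕ → ℤ) (a ℓ : ℕ)

theorem length_seg_add : (seg ω a (a + ℓ)).length = ℓ := by
  simp [seg]

theorem sum_seg_add : (seg ω a (a + ℓ)).sum = ∑ i ∈ range ℓ, ω (a + i) := by
  simp only [seg, Nat.add_sub_cancel_left]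
  rfl

theorem factor_seg_add : Factor ω (seg ω a (a + ℓ)) :=
  ⟨a, by simp [seg]⟩

end Seg

theorem UniformlyRecurrent.exists_window {ω : ℕ → ℤ} (hur : UniformlyRecurrent ω) (p ℓ : ℕ) :
    ∃ K, ∀ m, ∃ a, m ≤ a ∧ a + ℓ ≤ m + K ∧ ∀ j < ℓ, ω (a + j) = ω (p + j) := by
  obtain ⟨K, hK⟩ := hur ℓ
  refine ⟨K, fun m => ?_⟩
  obtain ⟨k, hk, hget⟩ := List.infix_iff_getElem?.1 <| hK _ _ (factor_seg_add ω p ℓ)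
    (length_seg_add ω p ℓ) (factor_seg_add ω m K) (length_seg_add ω m K)
  simp only [length_seg_add] at hk hget
  refine ⟨m + k, by omega, by omega, fun j hj => ?_⟩
  have := hget j (by simpa [length_seg_add] using hj)
  rw [add_comm j k] at this
  simpa [seg, List.getElem?_range (show k + j < K by omega), add_assoc] using this

theorem sub_le_card_image_mul {g : ℕ → ℤ} {D : ℤ} (hD : 0 ≤ D) (hstep : ∀ k, g (k + 1) ≤ g k + D)
    (b : ℕ) : ∀ k ≤ b, g k - g 0 ≤ #((range (b + 1)).image g) * D := by
  induction b with
  | zero =>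
    intro k hk
    obtain rfl : k = 0 := by omega
    simpa using hD
  | succ b ih =>
    have hsub : (range (b + 1)).image g ⊆ (range (b + 2)).image g :=
      image_subset_image (range_subset_range.2 (by omega))
    have hcard : (#((range (b + 1)).image g) : ℤ) ≤ #((range (b + 2)).image g) := by
      exact_mod_cast card_le_card hsub
    have hmono : ∀ k ≤ b, g k - g 0 ≤ #((range (b + 2)).image g) * D := fun k hk =>
      (ih k hk).trans (mul_le_mul_of_nonneg_right hcard hD)
    intro k hk
    rcases Nat.lt_succ_iff_lt_or_eq.1 (Nat.lt_succ_of_le hk) with hk | rfl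
    · exact hmono k (by omega)
    by_cases hle : ∃ k ≤ b, g (b + 1) ≤ g k
    · obtain ⟨k, hk, hgk⟩ := hle
      linarith [hmono k hk]
    push Not at hle
    have hnew : g (b + 1) ∉ (range (b + 1)).image g := by
      simp only [mem_image, mem_range, not_exists, not_and]
      exact fun k hk => (hle k (by omega)).ne
    have hins : (range (b + 2)).image g = insert (g (b + 1)) ((range (b + 1)).image g) := by
      rw [range_add_one (n := b + 1), image_insert]
    rw [hins, card_insert_of_notMem hnew]
    push_cast
    linarith [ih b le_rfl, hstep b]

theorem abs_sub_le_card_mul {g : ℕ → ℤ} {D : ℤ} (hD : 0 ≤ D) (hstep : ∀ k, |g (k + 1) - g k| ≤ D)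
    {T : Finset ℤ} (hT : ∀ k, g k ∈ T) (b : ℕ) : |g b - g 0| ≤ #T * D := by
  classical
  have hcard : ∀ f : ℤ → ℤ, #((range (b + 1)).image (f ∘ g)) ≤ #T := fun f => by
    rw [← image_image]
    exact card_image_le.trans (card_le_card (image_subset_iff.2 fun k _ => hT k))
  have bound : ∀ f : ℤ → ℤ, (∀ k, f (g (k + 1)) ≤ f (g k) + D) →
      f (g b) - f (g 0) ≤ #T * D := fun f hf =>
    (sub_le_card_image_mul (g := f ∘ g) hD hf b b le_rfl).trans
      (mul_le_mul_of_nonneg_right (by exact_mod_cast hcard f) hD)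
  rw [abs_le]
  constructor
  · linarith [bound (fun x => -x) fun k => by linarith [(abs_le.1 (hstep k)).1]]
  · exact bound (fun x => x) fun k => by linarith [(abs_le.1 (hstep k)).2]

theorem BoundedAddComplexity.exists_abs_sum_sub_le_s9 {ω : ℕ → ℤ} (hfin : (Set.range ω).Finite)
    (hb : BoundedAddComplexity ω) :
    ∃ C : ℤ, ∀ m n, |∑ i ∈ range n, ω (m + i) - ∑ i ∈ range n, ω i| ≤ C := by
  obtain ⟨M, hM⟩ := hb
  obtain ⟨lo, hlo⟩ := hfin.bddBelow
  obtain ⟨hi, hhi⟩ := hfin.bddAbove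
  have hbound : ∀ i, lo ≤ ω i ∧ ω i ≤ hi := fun i => ⟨hlo ⟨i, rfl⟩, hhi ⟨i, rfl⟩⟩
  have hD : 0 ≤ hi - lo := by linarith [hbound 0]
  refine ⟨M * (hi - lo), fun m n => ?_⟩
  rcases Nat.eq_zero_or_pos n with rfl | hn
  · simpa using mul_nonneg (Nat.cast_nonneg M) hD
  obtain ⟨T, hTM, hT⟩ := hM n hn
  have hstep : ∀ k, |∑ i ∈ range n, ω (k + 1 + i) - ∑ i ∈ range n, ω (k + i)| ≤ hi - lo := by
    intro k
    have h := sum_range_succ (fun i => ω (k + i)) n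
    rw [sum_range_succ'] at h
    simp only [add_zero, ← add_assoc, add_right_comm k _ 1] at h
    rw [abs_le]
    constructor <;> linarith [hbound k, hbound (k + n)]
  have hmem : ∀ k, ∑ i ∈ range n, ω (k + i) ∈ T := fun k => by
    simpa [sum_seg_add] using hT _ (factor_seg_add ω k n) (length_seg_add ω k n)
  have hwalk := abs_sub_le_card_mul (g := fun k => ∑ i ∈ range n, ω (k + i)) hD hstep hmem m
  simp only [zero_add] at hwalk
  calc _ ≤ #T * (hi - lo) := hwalk
    _ ≤ M * (hi - lo) := mul_le_mul_of_nonneg_right (by exact_mod_cast hTM) hD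

theorem abs_le_of_abs_add_sub_le {G : ℕ → ℝ} {C : ℝ} (hG : ∀ m n, |G (m + n) - G m - G n| ≤ C)
    (hlim : Tendsto (fun n => G n / n) atTop (𝓝 0)) (n : ℕ) : |G n| ≤ C := by
  rcases Nat.eq_zero_or_pos n with rfl | hn
  · simpa using hG 0 0
  have hmul : ∀ k ≥ 1, |G (k * n) - k * G n| ≤ k * C := by
    intro k hk
    induction k, hk using Nat.le_induction with
    | base => simpa using (abs_nonneg _).trans (hG 0 0)
    | succ k _ ih =>
      calc |G ((k + 1) * n) - ↑(k + 1) * G n|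
          = |(G (k * n + n) - G (k * n) - G n) + (G (k * n) - k * G n)| := by
            rw [add_one_mul]; push_cast; ring_nf
        _ ≤ C + k * C := (abs_add_le _ _).trans (add_le_add (hG _ _) ih)
        _ = ↑(k + 1) * C := by push_cast; ring
  have hnR : (0 : ℝ) < n := by exact_mod_cast hn
  have hconv : Tendsto (fun k : ℕ => G n - n * (G (k * n) / ↑(k * n))) atTop (𝓝 (G n)) := by
    simpa using tendsto_const_nhds.sub
      ((hlim.comp (tendsto_id.atTop_mul_const' hn)).const_mul (n : ℝ))
  refine le_of_tendsto hconv.abs (eventually_atTop.2 ⟨1, fun k hk => ?_⟩)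
  have hkR : (0 : ℝ) < k := by exact_mod_cast hk
  have hrw : G n - n * (G (k * n) / ↑(k * n)) = -((G (k * n) - k * G n) / k) := by
    push_cast; field_simp; ring
  rw [hrw, abs_neg, abs_div, abs_of_pos hkR, div_le_iff₀ hkR, mul_comm C]
  exact hmul k hk

theorem exists_frequently_eq_and_eventually_mem_Icc {ι β : Type*} [LinearOrder β] {l : Filter ι}
    [l.NeBot] {F : ι → β} (hF : (Set.range F).Finite) :
    ∃ v w, (∃ᶠ x in l, F x = v) ∧ (∃ᶠ x in l, F x = w) ∧ ∀ᶠ x in l, F x ∈ Set.Icc v w := by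
  classical
  set V := hF.toFinset.filter fun y => ∃ᶠ x in l, F x = y
  have hV : ∀ᶠ x in l, F x ∈ V := by
    have hall : ∀ y ∈ hF.toFinset, ∀ᶠ x in l, F x = y → ∃ᶠ x' in l, F x' = y := fun y _ => by
      by_cases hy : ∃ᶠ x in l, F x = y
      · exact .of_forall fun _ _ => hy
      · exact (not_frequently.1 hy).mono fun _ hx h => absurd h hx
    filter_upwards [(eventually_all_finset _).2 hall] with x hx
    exact mem_filter.2 ⟨by simp, hx _ (by simp) rfl⟩
  have hne : V.Nonempty := let ⟨x, hx⟩ := hV.exists; ⟨_, hx⟩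
  refine ⟨V.min' hne, V.max' hne, (mem_filter.1 (V.min'_mem hne)).2,
    (mem_filter.1 (V.max'_mem hne)).2, hV.mono fun x hx => ⟨V.min'_le _ hx, V.le_max' _ hx⟩⟩

theorem exists_strictMono_of_forall_exists_mem_Ioc {A : Set ℕ} {N L : ℕ}
    (h : ∀ m ≥ N, ∃ r ∈ A, r ∈ Set.Ioc m (m + L)) :
    ∃ n : ℕ → ℕ, StrictMono n ∧ (∀ i, n i ∈ A) ∧ ∀ i, n (i + 1) - n i ≤ L := by
  choose! next hnextA hnext using h
  have hge : ∀ i, N ≤ next^[i] N := fun i => by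
    induction i with
    | zero => exact le_rfl
    | succ i ih => rw [Function.iterate_succ_apply']; exact ((hnext _ ih).1).le.trans' ih
  refine ⟨fun i => next^[i + 1] N, strictMono_nat_of_lt_succ fun i => ?_, fun i => ?_, fun i => ?_⟩
  · rw [Function.iterate_succ_apply' _ (i + 1)]; exact (hnext _ (hge _)).1
  · dsimp only; rw [Function.iterate_succ_apply']; exact hnextA _ (hge i)
  · dsimp only; rw [Function.iterate_succ_apply' _ (i + 1)]
    have := (hnext _ (hge (i + 1))).2; omega

/-- `α.den * (ω 0 + ⋯ + ω (n - 1) - α * n)`, kept in `ℤ`. -/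
def slopeDeviation (ω : ℕ → ℤ) (α : ℚ) (n : ℕ) : ℤ :=
  ∑ i ∈ range n, ((α.den : ℤ) * ω i - α.num)

section SlopeDeviation

variable {ω : ℕ → ℤ} {α : ℚ}

theorem slopeDeviation_eq (ω : ℕ → ℤ) (α : ℚ) (n : ℕ) :
    slopeDeviation ω α n = α.den * ∑ i ∈ range n, ω i - α.num * n := by
  simp only [slopeDeviation, sum_sub_distrib, mul_sum, sum_const, card_range, nsmul_eq_mul]
  ring

theorem slopeDeviation_add (ω : ℕ → ℤ) (α : ℚ) (a ℓ : ℕ) :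
    slopeDeviation ω α (a + ℓ) =
      slopeDeviation ω α a + (α.den * ∑ j ∈ range ℓ, ω (a + j) - α.num * ℓ) := by
  rw [slopeDeviation_eq, slopeDeviation_eq, sum_range_add]
  push_cast; ring

theorem slopeDeviation_add_sub_eq {a p ℓ : ℕ} (h : ∀ j < ℓ, ω (a + j) = ω (p + j)) :
    slopeDeviation ω α (a + ℓ) - slopeDeviation ω α a =
      slopeDeviation ω α (p + ℓ) - slopeDeviation ω α p := by
  rw [slopeDeviation_add, slopeDeviation_add, sum_congr rfl fun j hj => h j (mem_range.1 hj)]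
  ring

theorem wordSlope_seg_eq_of_slopeDeviation_eq {a b : ℕ} (hab : a < b)
    (h : slopeDeviation ω α b = slopeDeviation ω α a) : wordSlope (seg ω a b) = α := by
  obtain ⟨ℓ, hℓ, rfl⟩ : ∃ ℓ, 0 < ℓ ∧ b = a + ℓ := ⟨b - a, by omega, by omega⟩
  rw [slopeDeviation_add] at h
  rw [wordSlope, length_seg_add, sum_seg_add, ← Rat.num_div_den α,
    div_eq_div_iff (by positivity) (by positivity)]
  exact_mod_cast (by linarith : (∑ j ∈ range ℓ, ω (a + j)) * α.den = α.num * ℓ)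

theorem exists_abs_slopeDeviation_le (hfin : (Set.range ω).Finite)
    (hb : BoundedAddComplexity ω) (hs : HasSlope ω α) :
    ∃ B : ℤ, ∀ n, |slopeDeviation ω α n| ≤ B := by
  obtain ⟨C, hC⟩ := hb.exists_abs_sum_sub_le_s9 hfin
  refine ⟨α.den * C, fun n => ?_⟩
  have hG : ∀ m n, |(slopeDeviation ω α (m + n) : ℝ) - slopeDeviation ω α m -
      slopeDeviation ω α n| ≤ ((α.den * C : ℤ) : ℝ) := fun m n => by
    have hsplit : slopeDeviation ω α (m + n) - slopeDeviation ω α m - slopeDeviation ω α n =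
        α.den * (∑ i ∈ range n, ω (m + i) - ∑ i ∈ range n, ω i) := by
      rw [slopeDeviation_add, slopeDeviation_eq ω α n]; ring
    rw [← Int.cast_sub, ← Int.cast_sub, ← Int.cast_abs, Int.cast_le, hsplit, abs_mul,
      abs_of_pos (by exact_mod_cast α.den_pos)]
    exact mul_le_mul_of_nonneg_left (hC m n) (by positivity)
  have hlim : Tendsto (fun n : ℕ => (slopeDeviation ω α n : ℝ) / n) atTop (𝓝 0) := by
    have hα : (α.den : ℝ) * α - α.num = 0 := by
      rw [sub_eq_zero]; exact_mod_cast Rat.den_mul_eq_num α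
    rw [← hα]
    refine ((hs.const_mul (α.den : ℝ)).sub_const (α.num : ℝ)).congr'
      (eventually_atTop.2 ⟨1, fun n _ => ?_⟩)
    have : (n : ℝ) ≠ 0 := by positivity
    simp only [slopeDeviation_eq]; push_cast; field_simp
  exact_mod_cast abs_le_of_abs_add_sub_le hG hlim n

end SlopeDeviation

/-- A uniformly recurrent word with bounded additive complexity and rational slope
factors into consecutive nonempty blocks of bounded length, all of slope equal to
the slope of ω. -/
theorem stmt9 (ω : ℕ → ℤ) (hfin : (Set.range ω).Finite)
    (hur : UniformlyRecurrent ω) (hb : BoundedAddComplexity ω)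
    (α : ℚ) (hs : HasSlope ω (α : ℝ)) :
    ∃ (Lb : ℕ) (n : ℕ → ℕ), StrictMono n ∧
      (∀ i : ℕ, n (i + 1) - n i ≤ Lb) ∧
      ∀ i : ℕ, wordSlope (seg ω (n i) (n (i + 1))) = α := by
  obtain ⟨B, hB⟩ := exists_abs_slopeDeviation_le hfin hb hs
  have hrange : (Set.range (slopeDeviation ω α)).Finite := (Set.finite_Icc (-B) B).subset <|
    Set.range_subset_iff.2 fun n => abs_le.1 (hB n)
  obtain ⟨v, w, hv, hw, hvw⟩ := exists_frequently_eq_and_eventually_mem_Icc (l := atTop) hrange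
  obtain ⟨N, hN⟩ := eventually_atTop.1 hvw
  obtain ⟨p, hpN, hpw⟩ := frequently_atTop.1 hw N
  obtain ⟨q, hpq, hqv⟩ := frequently_atTop.1 hv (p + 1)
  obtain ⟨K, hK⟩ := hur.exists_window p (q - p)
  -- Past `N` the deviation stays in `[v, w]`, so a copy of the descent from `w` to `v`
  -- on `[p, q]` must also end at `v`.
  have hvisit : ∀ m ≥ N, ∃ r ∈ {r | slopeDeviation ω α r = v}, r ∈ Set.Ioc m (m + (K + 1)) := by
    intro m hm
    obtain ⟨a, hma, haK, hcopy⟩ := hK (m + 1)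
    have hdesc := slopeDeviation_add_sub_eq (α := α) hcopy
    rw [Nat.add_sub_cancel' (by omega : p ≤ q), hpw, hqv] at hdesc
    have ha := hN a (by omega)
    have haq := hN (a + (q - p)) (by omega)
    exact ⟨a + (q - p), le_antisymm (by linarith [ha.2]) haq.1, by omega, by omega⟩
  obtain ⟨n, hn, hnv, hgap⟩ := exists_strictMono_of_forall_exists_mem_Ioc hvisit
  exact ⟨K + 1, n, hn, hgap, fun i =>
    wordSlope_seg_eq_of_slopeDeviation_eq (hn i.lt_succ_self) ((hnv _).trans (hnv _).symm)⟩
end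

section
/- Let S be a finite set of integers and let φ be a non-erasing morphism assigning to each s ∈ S a nonempty finite integer word φ(s), extended to finite and infinite words over S by concatenation. Then φ is an anchor (i.e., for every infinite word ω over S, the infinite word φ(ω) obtained by concatenating φ(ω(0))φ(ω(1))φ(ω(2))⋯ has bounded additive complexity) if and only if slope(φ(s)) = slope(φ(s′)) for all s, s′ ∈ S. -/
/-- The image of the length-`n` prefix of ω under the morphism φ. -/
def phiPrefix (φ : ℤ → List ℤ) (ω : ℕ → ℤ) (n : ℕ) : List ℤ :=
  ((List.range n).map (fun i => φ (ω i))).flatten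

/-- ω' is the image of the infinite word ω under the morphism φ, i.e. the infinite
concatenation φ(ω 0)φ(ω 1)φ(ω 2)⋯. -/
def IsImage (φ : ℤ → List ℤ) (ω ω' : ℕ → ℤ) : Prop :=
  ∀ n : ℕ, phiPrefix φ ω n = (List.range (phiPrefix φ ω n).length).map ω'

theorem factor_iff_getElem {ω : ℕ → ℤ} {B : List ℤ} :
    Factor ω B ↔ ∃ m, ∀ i (hi : i < B.length), B[i] = ω (m + i) := by
  refine exists_congr fun m =>
    ⟨fun h i hi => ?_, fun h => List.ext_getElem (by simp) fun i hi _ => ?_⟩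
  · simp [List.getElem_of_eq h hi]
  · simp [h i hi]

theorem factor_range_map (ω : ℕ → ℤ) (n : ℕ) : Factor ω ((List.range n).map ω) :=
  ⟨0, by simp⟩

theorem Factor.of_infix {ω : ℕ → ℤ} {B C : List ℤ} (hB : Factor ω B) (hC : C <:+: B) :
    Factor ω C := by
  obtain ⟨m, hm⟩ := factor_iff_getElem.mp hB
  obtain ⟨L₁, L₂, rfl⟩ := hC
  refine factor_iff_getElem.mpr ⟨m + L₁.length, fun i hi => ?_⟩
  have := hm (L₁.length + i) (by simp; omega)
  rw [List.getElem_append_left (by simp; omega), List.getElem_append_right (by omega)] at this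
  simpa [Nat.add_assoc] using this

theorem List.replicate_append_replicate_infix {α : Type*} (x y : α) {i i' j j' : ℕ}
    (hi : i ≤ i') (hj : j ≤ j') :
    replicate i x ++ replicate j y <:+: replicate i' x ++ replicate j' y := by
  obtain ⟨p, rfl⟩ := Nat.exists_eq_add_of_le' hi
  obtain ⟨q, rfl⟩ := Nat.exists_eq_add_of_le hj
  exact ⟨replicate p x, replicate q y, by simp only [replicate_add, append_assoc]⟩

section Morphism

variable (φ : ℤ → List ℤ) (ω : ℕ → ℤ)

theorem phiPrefix_add (p q : ℕ) :
    phiPrefix φ ω (p + q) =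
      phiPrefix φ ω p ++ ((List.range q).map fun i => φ (ω (p + i))).flatten := by
  simp only [phiPrefix, List.range_add, List.map_append, List.map_map, List.flatten_append]
  rfl

theorem phiPrefix_prefix_of_le {m n : ℕ} (h : m ≤ n) : phiPrefix φ ω m <+: phiPrefix φ ω n := by
  obtain ⟨q, rfl⟩ := Nat.exists_eq_add_of_le h
  rw [phiPrefix_add]
  exact List.prefix_append _ _

variable {φ ω}

theorem le_length_phiPrefix (h : ∀ i, φ (ω i) ≠ []) (n : ℕ) : n ≤ (phiPrefix φ ω n).length := by
  induction n with
  | zero => simp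
  | succ n ih =>
    simpa [phiPrefix_add φ ω n 1] using Nat.add_le_add ih (List.length_pos_iff.mpr (h n))

theorem exists_isImage (h : ∀ i, φ (ω i) ≠ []) : ∃ ω', IsImage φ ω ω' := by
  refine ⟨fun i => (phiPrefix φ ω (i + 1)).getD i 0, fun n => ?_⟩
  refine List.ext_getElem (by simp) fun i hi _ => ?_
  have hi' : i < (phiPrefix φ ω (i + 1)).length := le_length_phiPrefix h (i + 1)
  simp only [List.getElem_map, List.getElem_range, List.getD_eq_getElem _ _ hi']
  rcases le_total (i + 1) n with hle | hle
  · exact ((phiPrefix_prefix_of_le φ ω hle).getElem hi').symm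
  · exact (phiPrefix_prefix_of_le φ ω hle).getElem hi

variable {ω' : ℕ → ℤ}

theorem IsImage.take_phiPrefix (him : IsImage φ ω ω') {k N : ℕ}
    (hk : k ≤ (phiPrefix φ ω N).length) : (phiPrefix φ ω N).take k = (List.range k).map ω' := by
  rw [him N, ← List.map_take, List.take_range, min_eq_left hk]

theorem IsImage.exists_mem (him : IsImage φ ω ω') (h : ∀ i, φ (ω i) ≠ []) (i : ℕ) :
    ∃ j, ω' i ∈ φ (ω j) := by
  have hmem : ω' i ∈ phiPrefix φ ω (i + 1) := by
    rw [him]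
    exact List.mem_map.mpr ⟨i, List.mem_range.mpr (le_length_phiPrefix h (i + 1)), rfl⟩
  obtain ⟨_, hl, hx⟩ := List.mem_flatten.mp hmem
  obtain ⟨j, -, rfl⟩ := List.mem_map.mp hl
  exact ⟨j, hx⟩

theorem IsImage.factor_flatten_map (him : IsImage φ ω ω') {w : List ℤ} (hw : Factor ω w) :
    Factor ω' (w.map φ).flatten := by
  obtain ⟨p, hp⟩ := hw
  have hblock : ((List.range w.length).map fun i => φ (ω (p + i))) = w.map φ := by
    conv_rhs => rw [hp]
    simp [Function.comp_def]
  refine (him (p + w.length) ▸ factor_range_map ω' _).of_infix ?_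
  rw [phiPrefix_add, hblock]
  exact (List.suffix_append _ _).isInfix

end Morphism

theorem exists_forall_factor_replicate_append_replicate (x y : ℤ) :
    ∃ ω : ℕ → ℤ, (∀ i, ω i = x ∨ ω i = y) ∧
      ∀ i j, Factor ω (List.replicate i x ++ List.replicate j y) := by
  set ψ : ℤ → List ℤ := fun z => List.replicate (z.toNat + 1) x ++ List.replicate (z.toNat + 1) y
  have hne : ∀ n : ℕ, ψ n ≠ [] := by simp [ψ]
  obtain ⟨ω, him⟩ := exists_isImage hne
  refine ⟨ω, fun i => ?_, fun i j => ?_⟩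
  · obtain ⟨n, hn⟩ := him.exists_mem hne i
    simpa [ψ, List.mem_replicate] using hn
  · have hblock : Factor ω (ψ (i + j : ℕ)) := by
      simpa using him.factor_flatten_map (w := [((i + j : ℕ) : ℤ)]) ⟨i + j, rfl⟩
    exact hblock.of_infix (List.replicate_append_replicate_infix x y (by omega) (by omega))

theorem BoundedAddComplexity.eq_zero_of_forall_exists_factors {ω : ℕ → ℤ}
    (h : BoundedAddComplexity ω) (d : ℤ)
    (hfac : ∀ K : ℕ, ∃ n ≥ 1, ∃ c : ℤ, ∀ t ≤ K,
      ∃ B : List ℤ, Factor ω B ∧ B.length = n ∧ B.sum = c + t * d) :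
    d = 0 := by
  by_contra hd
  obtain ⟨M, hM⟩ := h
  obtain ⟨n, hn, c, hB⟩ := hfac M
  obtain ⟨T, hTcard, hT⟩ := hM n hn
  have hmaps : ∀ t ∈ Finset.range (M + 1), c + t * d ∈ T := by
    intro t ht
    obtain ⟨B, hBf, hBl, hBs⟩ := hB t (Finset.mem_range_succ_iff.mp ht)
    exact hBs ▸ hT B hBf hBl
  have hinj : Set.InjOn (fun t : ℕ => c + t * d) (Finset.range (M + 1)) := fun t₁ _ t₂ _ heq =>
    Nat.cast_injective (mul_right_cancel₀ hd (add_left_cancel heq))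
  have := Finset.card_le_card_of_injOn _ hmaps hinj
  rw [Finset.card_range] at this
  omega

theorem wordSlope_eq_of_boundedAddComplexity {ω : ℕ → ℤ} (h : BoundedAddComplexity ω)
    {u v : List ℤ} (hu : u ≠ []) (hv : v ≠ [])
    (hfac : ∀ i j, Factor ω (List.replicate i u ++ List.replicate j v).flatten) :
    wordSlope u = wordSlope v := by
  have ha := List.length_pos_iff.mpr hu
  have hb := List.length_pos_iff.mpr hv
  have hd := h.eq_zero_of_forall_exists_factors (v.length * u.sum - u.length * v.sum) fun K => by
    refine ⟨(K + 1) * u.length * v.length, Nat.one_le_iff_ne_zero.mpr (by positivity),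
      (K + 1) * u.length * v.sum, fun t ht => ?_⟩
    obtain ⟨r, hr⟩ : ∃ r, K + 1 = t + r := ⟨K + 1 - t, by omega⟩
    refine ⟨_, hfac (t * v.length) (r * u.length), ?_, ?_⟩
    · simp only [List.flatten_append, List.length_append, List.length_flatten, List.map_replicate,
        List.sum_replicate, smul_eq_mul, hr]
      ring
    · have hr' : (K : ℤ) + 1 = t + r := by exact_mod_cast hr
      simp only [List.flatten_append, List.sum_append, List.sum_flatten, List.map_replicate,
        List.sum_replicate, nsmul_eq_mul]
      push_cast
      linear_combination (-(u.length : ℤ) * v.sum) * hr'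
  rw [wordSlope, wordSlope, div_eq_div_iff (by positivity) (by positivity)]
  exact_mod_cast (by linarith : u.sum * (v.length : ℤ) = v.sum * u.length)

theorem sum_eq_wordSlope_mul {w : List ℤ} (hw : w ≠ []) : (w.sum : ℚ) = wordSlope w * w.length := by
  rw [wordSlope, div_mul_cancel₀]
  exact_mod_cast (List.length_pos_iff.mpr hw).ne'

theorem abs_sum_take_flatten_sub_le {α D : ℚ} (hD : 0 ≤ D) {L : List (List ℤ)}
    (hbal : ∀ w ∈ L, (w.sum : ℚ) = α * w.length)
    (hdev : ∀ w ∈ L, ∀ k ≤ w.length, |((w.take k).sum : ℚ) - α * k| ≤ D) :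
    ∀ k ≤ L.flatten.length, |((L.flatten.take k).sum : ℚ) - α * k| ≤ D := by
  induction L with
  | nil =>
    intro k hk
    simp_all
  | cons w L ih =>
    intro k hk
    simp only [List.forall_mem_cons] at hbal hdev
    rw [List.flatten_cons] at hk ⊢
    rcases le_total k w.length with hkw | hkw
    · rw [List.take_append_of_le_length hkw]
      exact hdev.1 k hkw
    · obtain ⟨r, rfl⟩ := Nat.exists_eq_add_of_le hkw
      rw [List.length_append] at hk
      rw [List.take_length_add_append, List.sum_append, Int.cast_add, hbal.1]
      convert ih hbal.2 hdev.2 r (by omega) using 2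
      push_cast
      ring

theorem boundedAddComplexity_of_abs_sum_sub_le {ω : ℕ → ℤ} (α D : ℚ)
    (h : ∀ k, |((((List.range k).map ω).sum : ℤ) : ℚ) - α * k| ≤ D) :
    BoundedAddComplexity ω := by
  refine ⟨(⌊4 * D⌋ + 1).toNat, fun n _ =>
    ⟨Finset.Icc ⌈α * n - 2 * D⌉ ⌊α * n + 2 * D⌋, ?_, fun B hB hlen => ?_⟩⟩
  · rw [Int.card_Icc]
    apply Int.toNat_le_toNat
    have h₁ := Int.floor_le (α * n + 2 * D)
    have h₂ := Int.le_ceil (α * n - 2 * D)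
    have : ⌊α * n + 2 * D⌋ - ⌈α * n - 2 * D⌉ ≤ ⌊4 * D⌋ :=
      Int.le_floor.mpr (by push_cast; linarith)
    omega
  · obtain ⟨m, hm⟩ := hB
    have hsplit : (((List.range (m + n)).map ω).sum : ℚ) =
        (((List.range m).map ω).sum : ℚ) + B.sum := by
      rw [hm, hlen, List.range_add, List.map_append, List.map_map, List.sum_append, Int.cast_add]
      rfl
    have h₁ := abs_le.mp (h (m + n))
    have h₂ := abs_le.mp (h m)
    rw [Nat.cast_add] at h₁
    rw [Finset.mem_Icc, Int.ceil_le, Int.le_floor]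
    constructor <;> linarith

theorem IsImage.boundedAddComplexity {S : Finset ℤ} {φ : ℤ → List ℤ} (hφ : ∀ s ∈ S, φ s ≠ [])
    {α : ℚ} (hα : ∀ s ∈ S, wordSlope (φ s) = α) {ω ω' : ℕ → ℤ} (hω : ∀ i, ω i ∈ S)
    (him : IsImage φ ω ω') : BoundedAddComplexity ω' := by
  set dev : List ℤ → ℕ → ℚ := fun w k => |((w.take k).sum : ℚ) - α * k|
  set D : ℚ := ∑ s ∈ S, ∑ k ∈ Finset.range ((φ s).length + 1), dev (φ s) k
  have hD : 0 ≤ D := Finset.sum_nonneg fun _ _ => Finset.sum_nonneg fun _ _ => abs_nonneg _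
  have hdev : ∀ s ∈ S, ∀ k ≤ (φ s).length, dev (φ s) k ≤ D := fun s hs k hk =>
    (Finset.single_le_sum (f := dev (φ s)) (fun _ _ => abs_nonneg _)
      (Finset.mem_range_succ_iff.mpr hk)).trans
    (Finset.single_le_sum (f := fun s => ∑ k ∈ Finset.range ((φ s).length + 1), dev (φ s) k)
      (fun _ _ => Finset.sum_nonneg fun _ _ => abs_nonneg _) hs)
  refine boundedAddComplexity_of_abs_sum_sub_le α D fun k => ?_
  have hk := le_length_phiPrefix (fun i => hφ _ (hω i)) k
  rw [← him.take_phiPrefix hk]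
  refine abs_sum_take_flatten_sub_le hD ?_ ?_ k hk <;>
    simp only [List.mem_map, forall_exists_index, and_imp] <;>
    rintro _ i - rfl
  · rw [sum_eq_wordSlope_mul (hφ _ (hω i)), hα _ (hω i)]
  · exact hdev _ (hω i)

/-- A non-erasing morphism is an anchor (the image of every infinite word over S has
bounded additive complexity) iff all letter images have equal slope. -/
theorem stmt11 (S : Finset ℤ) (φ : ℤ → List ℤ) (hφ : ∀ s ∈ S, φ s ≠ []) :
    (∀ ω : ℕ → ℤ, (∀ i : ℕ, ω i ∈ S) →
      ∀ ω' : ℕ → ℤ, IsImage φ ω ω' → BoundedAddComplexity ω')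
    ↔ ∀ s ∈ S, ∀ s' ∈ S, wordSlope (φ s) = wordSlope (φ s') := by
  refine ⟨fun H s hs s' hs' => ?_, fun h ω hω ω' him => ?_⟩
  · obtain ⟨ω, hωS, hfac⟩ := exists_forall_factor_replicate_append_replicate s s'
    have hωS : ∀ i, ω i ∈ S := fun i => (hωS i).elim (· ▸ hs) (· ▸ hs')
    obtain ⟨ω', him⟩ := exists_isImage fun i => hφ _ (hωS i)
    refine wordSlope_eq_of_boundedAddComplexity (H ω hωS ω' him) (hφ s hs) (hφ s' hs')
      fun i j => ?_
    simpa [List.map_replicate] using him.factor_flatten_map (hfac i j)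
  · exact him.boundedAddComplexity hφ (fun s hs => h s hs _ (hω 0)) hω
end

section
/- Let S be a finite set of integers and let φ be a non-erasing morphism assigning to each s ∈ S a nonempty finite integer word φ(s) over a finite integer alphabet T, extended to finite words over S by concatenation. Suppose that for all finite words B₁, B₂ over S, |φ(B₁)| = |φ(B₂)| implies Σφ(B₁) = Σφ(B₂). Then for every fixed N ∈ ℕ the quantity |Σφ(B₁) − Σφ(B₂)| is bounded over all pairs of finite words B₁, B₂ over S with ||φ(B₁)| − |φ(B₂)|| ≤ 2N − 2; in fact it is at most (2N − 2)·max_{t ∈ T} |t|. -/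
namespace List

theorem abs_sum_le_length_nsmul {G : Type*} [AddCommGroup G] [LinearOrder G] [IsOrderedAddMonoid G]
    {l : List G} {M : G} (h : ∀ x ∈ l, |x| ≤ M) : |l.sum| ≤ l.length • M := by
  rw [abs_le, ← neg_nsmul]
  exact ⟨card_nsmul_le_sum l (-M) fun x hx => neg_le_of_abs_le (h x hx),
    sum_le_card_nsmul l M fun x hx => le_of_abs_le (h x hx)⟩

theorem flatten_map_flatten_replicate {α β : Type*} (φ : α → List β) (k : ℕ) (B : List α) :
    ((replicate k B).flatten.map φ).flatten = (replicate k (B.map φ).flatten).flatten := by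
  simp [map_flatten, flatten_flatten]

theorem length_flatten_replicate {α : Type*} (k : ℕ) (w : List α) :
    (replicate k w).flatten.length = k * w.length := by
  simp [length_flatten]

theorem sum_flatten_replicate {M : Type*} [AddMonoid M] (k : ℕ) (w : List M) :
    (replicate k w).flatten.sum = k • w.sum := by
  simp [sum_flatten]

end List

open List in
theorem nsmul_sum_eq_nsmul_sum_of_length_eq {α β : Type*} [AddMonoid β] {p : α → Prop}
    {φ : α → List β}
    (hcond : ∀ B₁ B₂ : List α, (∀ x ∈ B₁, p x) → (∀ x ∈ B₂, p x) →
      (B₁.map φ).flatten.length = (B₂.map φ).flatten.length →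
      (B₁.map φ).flatten.sum = (B₂.map φ).flatten.sum)
    {B₁ B₂ : List α} (h₁ : ∀ x ∈ B₁, p x) (h₂ : ∀ x ∈ B₂, p x) :
    (B₂.map φ).flatten.length • (B₁.map φ).flatten.sum
      = (B₁.map φ).flatten.length • (B₂.map φ).flatten.sum := by
  have hpow : ∀ (k : ℕ) (B : List α), (∀ x ∈ B, p x) → ∀ x ∈ (replicate k B).flatten, p x := by
    intro k B hB x hx
    obtain ⟨l, hl, hxl⟩ := mem_flatten.mp hx
    exact hB x ((eq_of_mem_replicate hl) ▸ hxl)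
  have hpowers := hcond _ _ (hpow (B₂.map φ).flatten.length B₁ h₁)
    (hpow (B₁.map φ).flatten.length B₂ h₂)
  simp only [flatten_map_flatten_replicate, length_flatten_replicate, sum_flatten_replicate]
    at hpowers
  exact hpowers (Nat.mul_comm _ _)

theorem abs_sub_le_mul_abs_sub_of_mul_eq_mul {R : Type*} [CommRing R] [LinearOrder R]
    [IsStrictOrderedRing R] {L₁ L₂ s₁ s₂ M : R} (hL₁ : 0 ≤ L₁) (hL₂ : 0 ≤ L₂)
    (hprop : L₂ * s₁ = L₁ * s₂) (hs₁ : |s₁| ≤ L₁ * M) (hs₂ : |s₂| ≤ L₂ * M) :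
    |s₁ - s₂| ≤ |L₁ - L₂| * M := by
  rcases hL₁.eq_or_lt with rfl | hpos
  · have hs₁0 : s₁ = 0 := abs_nonpos_iff.mp (by simpa using hs₁)
    simpa [hs₁0, abs_of_nonneg hL₂] using hs₂
  · have key : L₁ * (s₁ - s₂) = (L₁ - L₂) * s₁ := by linear_combination hprop
    refine le_of_mul_le_mul_left ?_ hpos
    calc L₁ * |s₁ - s₂| = |L₁ * (s₁ - s₂)| := by rw [abs_mul, abs_of_pos hpos]
      _ = |L₁ - L₂| * |s₁| := by rw [key, abs_mul]
      _ ≤ |L₁ - L₂| * (L₁ * M) := mul_le_mul_of_nonneg_left hs₁ (abs_nonneg _)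
      _ = L₁ * (|L₁ - L₂| * M) := by ring

/-- Under condition (ii) of Lemma 5, the sums of φ-images of words whose image lengths
differ by at most 2N - 2 differ by at most (2N - 2)·max_{t ∈ T} |t|. -/
theorem stmt13 (S T : Finset ℤ) (φ : ℤ → List ℤ)
    (hφ : ∀ s ∈ S, φ s ≠ [] ∧ ∀ x ∈ φ s, x ∈ T)
    (hcond : ∀ B₁ B₂ : List ℤ, (∀ x ∈ B₁, x ∈ S) → (∀ x ∈ B₂, x ∈ S) →
      (B₁.map φ).flatten.length = (B₂.map φ).flatten.length →
      (B₁.map φ).flatten.sum = (B₂.map φ).flatten.sum) :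
    ∀ N : ℕ, ∀ B₁ B₂ : List ℤ, (∀ x ∈ B₁, x ∈ S) → (∀ x ∈ B₂, x ∈ S) →
      |((B₁.map φ).flatten.length : ℤ) - ((B₂.map φ).flatten.length : ℤ)|
        ≤ 2 * (N : ℤ) - 2 →
      |(B₁.map φ).flatten.sum - (B₂.map φ).flatten.sum|
        ≤ (2 * (N : ℤ) - 2) * ((T.sup (fun t => t.natAbs) : ℕ) : ℤ) := by
  intro N B₁ B₂ h₁ h₂ hlen
  set M : ℤ := ((T.sup (fun t => t.natAbs) : ℕ) : ℤ)
  have hbound : ∀ B : List ℤ, (∀ x ∈ B, x ∈ S) →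
      |(B.map φ).flatten.sum| ≤ ((B.map φ).flatten.length : ℤ) * M := by
    intro B hB
    have hletter : ∀ x ∈ (B.map φ).flatten, |x| ≤ M := by
      intro x hx
      obtain ⟨_, hl, hxl⟩ := List.mem_flatten.mp hx
      obtain ⟨s, hs, rfl⟩ := List.mem_map.mp hl
      rw [Int.abs_eq_natAbs]
      exact Int.ofNat_le.mpr (Finset.le_sup (f := fun t => t.natAbs) ((hφ s (hB s hs)).2 x hxl))
    simpa only [nsmul_eq_mul] using List.abs_sum_le_length_nsmul hletter
  have hprop := nsmul_sum_eq_nsmul_sum_of_length_eq hcond h₁ h₂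
  rw [nsmul_eq_mul, nsmul_eq_mul] at hprop
  calc _ ≤ |((B₁.map φ).flatten.length : ℤ) - (B₂.map φ).flatten.length| * M :=
        abs_sub_le_mul_abs_sub_of_mul_eq_mul (by positivity) (by positivity) hprop
          (hbound B₁ h₁) (hbound B₂ h₂)
    _ ≤ _ := mul_le_mul_of_nonneg_right hlen (by positivity)
end

section
/- Let S be a finite nonempty set of integers and let φ be an anchor on S, i.e., a non-erasing morphism such that for every infinite word ω over S the word φ(ω) has bounded additive complexity; equivalently, all letter images φ(s), s ∈ S, have a common slope ‖φ‖ (the weight of φ). Then for every infinite word ω over S, slope(φ(ω)) exists and equals ‖φ‖. -/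
/-!
The prefix `φ(ω 0) ⋯ φ(ω (n-1))` of `φ(ω)` has sum exactly `w` times its length, since each block
does. Every position `N` lies within `K = max_s |φ(s)|` of such a block boundary and the letters
of `φ(ω)` are bounded, so the partial sums of `φ(ω)` stay within a bounded distance of `w N`;
dividing by `N` gives the slope.
-/

open Filter Topology Finset

theorem Nat.exists_le_lt_succ_of_strictMono {L : ℕ → ℕ} (hL : StrictMono L) (h0 : L 0 = 0)
    (N : ℕ) : ∃ n, L n ≤ N ∧ N < L (n + 1) := by
  induction N with
  | zero => exact ⟨0, h0.le, h0.symm.trans_lt (hL Nat.zero_lt_one)⟩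
  | succ N ih =>
    obtain ⟨n, hle, hlt⟩ := ih
    rcases (Nat.succ_le_of_lt hlt).lt_or_eq with hlt' | heq
    · exact ⟨n, by omega, hlt'⟩
    · exact ⟨n + 1, heq.ge, heq.trans_lt (hL (Nat.lt_succ_self _))⟩

theorem tendsto_div_of_abs_sub_mul_le {a : ℕ → ℝ} {w R : ℝ} (h : ∀ N, |a N - w * N| ≤ R) :
    Tendsto (fun N => a N / N) atTop (𝓝 w) := by
  have hdev : Tendsto (fun N : ℕ => a N / N - w) atTop (𝓝 0) := by
    refine squeeze_zero_norm' ?_ (tendsto_const_div_atTop_nhds_zero_nat R)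
    filter_upwards [eventually_gt_atTop 0] with N hN
    have hN : (0 : ℝ) < N := Nat.cast_pos.2 hN
    rw [Real.norm_eq_abs, div_sub' hN.ne', abs_div, abs_of_pos hN, mul_comm]
    gcongr
    exact h N
  simpa using hdev.add_const w

theorem abs_sum_range_sub_mul_le {f : ℕ → ℝ} {w C : ℝ} {K : ℕ} (hC : ∀ j, |f j| ≤ C)
    (hexact : ∀ N, ∃ M ≤ N, N ≤ M + K ∧ ∑ i ∈ range M, f i = w * M) (N : ℕ) :
    |∑ i ∈ range N, f i - w * N| ≤ (C + |w|) * K := by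
  obtain ⟨M, hMN, hNM, hM⟩ := hexact N
  have hsplit : ∑ i ∈ range N, f i - w * N = ∑ i ∈ Ico M N, f i - w * (N - M : ℕ) := by
    rw [← sum_range_add_sum_Ico _ hMN, hM, Nat.cast_sub hMN]
    ring
  have hgap : ((N - M : ℕ) : ℝ) ≤ K := by exact_mod_cast (by omega : N - M ≤ K)
  have hC0 : 0 ≤ C := (abs_nonneg _).trans (hC 0)
  calc |∑ i ∈ range N, f i - w * N|
      ≤ |∑ i ∈ Ico M N, f i| + |w| * (N - M : ℕ) := by
        rw [hsplit]
        exact (abs_sub _ _).trans_eq (by rw [abs_mul, Nat.abs_cast])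
    _ ≤ C * (N - M : ℕ) + |w| * (N - M : ℕ) := by
        gcongr
        refine (abs_sum_le_sum_abs _ _).trans ?_
        simpa [mul_comm] using sum_le_sum fun j (_ : j ∈ Ico M N) => hC j
    _ ≤ (C + |w|) * K := by rw [← add_mul]; gcongr

theorem sum_eq_mul_length_of_wordSlope_eq {B : List ℤ} {w : ℚ} (hB : B ≠ [])
    (h : wordSlope B = w) : (B.sum : ℚ) = w * B.length := by
  rw [← h, wordSlope, div_mul_cancel₀]
  exact_mod_cast (List.length_pos_iff.2 hB).ne'

theorem phiPrefix_zero (φ : ℤ → List ℤ) (ω : ℕ → ℤ) : phiPrefix φ ω 0 = [] := rfl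

theorem phiPrefix_succ (φ : ℤ → List ℤ) (ω : ℕ → ℤ) (n : ℕ) :
    phiPrefix φ ω (n + 1) = phiPrefix φ ω n ++ φ (ω n) := by
  simp [phiPrefix, List.range_succ]

theorem sum_phiPrefix_eq_mul_length {φ : ℤ → List ℤ} {ω : ℕ → ℤ} {w : ℚ}
    (hw : ∀ i, ((φ (ω i)).sum : ℚ) = w * (φ (ω i)).length) (n : ℕ) :
    ((phiPrefix φ ω n).sum : ℚ) = w * (phiPrefix φ ω n).length := by
  induction n with
  | zero => simp [phiPrefix_zero]
  | succ n ih =>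
    rw [phiPrefix_succ, List.sum_append, List.length_append, Int.cast_add, Nat.cast_add, ih, hw]
    ring

theorem IsImage.sum_range_length_phiPrefix {φ : ℤ → List ℤ} {ω ω' : ℕ → ℤ}
    (h : IsImage φ ω ω') (n : ℕ) :
    ∑ i ∈ range (phiPrefix φ ω n).length, ω' i = (phiPrefix φ ω n).sum := by
  conv_rhs => rw [h n]
  rw [sum_eq_multiset_sum, range_val, Multiset.range, Multiset.map_coe, Multiset.sum_coe]

theorem IsImage.exists_mem_of_lt_length {φ : ℤ → List ℤ} {ω ω' : ℕ → ℤ} (h : IsImage φ ω ω')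
    {n j : ℕ} (hj : j < (phiPrefix φ ω n).length) : ∃ i, ω' j ∈ φ (ω i) := by
  have hmem : ω' j ∈ phiPrefix φ ω n := by
    rw [h n]
    exact List.mem_map_of_mem (List.mem_range.2 hj)
  obtain ⟨_, hB, hjB⟩ := List.mem_flatten.1 hmem
  obtain ⟨i, -, rfl⟩ := List.mem_map.1 hB
  exact ⟨i, hjB⟩

theorem strictMono_length_phiPrefix {φ : ℤ → List ℤ} {ω : ℕ → ℤ} (hne : ∀ i, φ (ω i) ≠ []) :
    StrictMono fun n => (phiPrefix φ ω n).length :=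
  strictMono_nat_of_lt_succ fun n => by simp [phiPrefix_succ, List.length_pos_iff.2 (hne n)]

theorem IsImage.exists_abs_le {φ : ℤ → List ℤ} {ω ω' : ℕ → ℤ} (h : IsImage φ ω ω')
    {S : Finset ℤ} (hω : ∀ i, ω i ∈ S) (hne : ∀ i, φ (ω i) ≠ []) :
    ∃ C, ∀ j, |(ω' j : ℝ)| ≤ C := by
  obtain ⟨C, hC⟩ := ((S.biUnion fun s => (φ s).toFinset).image fun x : ℤ => |(x : ℝ)|).bddAbove
  refine ⟨C, fun j => hC ?_⟩
  obtain ⟨i, hi⟩ := h.exists_mem_of_lt_length ((strictMono_length_phiPrefix hne).id_le (j + 1))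
  exact mem_image_of_mem _ (mem_biUnion.2 ⟨_, hω i, List.mem_toFinset.2 hi⟩)

theorem stmt14_general (S : Finset ℤ) (φ : ℤ → List ℤ)
    (hφ : ∀ s ∈ S, φ s ≠ []) (w : ℚ) (hw : ∀ s ∈ S, wordSlope (φ s) = w) :
    ∀ ω : ℕ → ℤ, (∀ i : ℕ, ω i ∈ S) → ∀ ω' : ℕ → ℤ, IsImage φ ω ω' →
      HasSlope ω' (w : ℝ) := by
  intro ω hω ω' hω'
  have hne : ∀ i, φ (ω i) ≠ [] := fun i => hφ _ (hω i)
  set L : ℕ → ℕ := fun n => (phiPrefix φ ω n).length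
  set K := S.sup fun s => (φ s).length
  have hexact : ∀ N, ∃ M ≤ N, N ≤ M + K ∧ ∑ i ∈ range M, (ω' i : ℝ) = w * M := by
    intro N
    obtain ⟨n, hle, hlt⟩ : ∃ n, L n ≤ N ∧ N < L (n + 1) :=
      Nat.exists_le_lt_succ_of_strictMono (strictMono_length_phiPrefix hne) rfl N
    have hstep : L (n + 1) ≤ L n + K := by
      simpa [L, phiPrefix_succ] using le_sup (f := fun s => (φ s).length) (hω n)
    refine ⟨L n, hle, by omega, ?_⟩
    have hsum := sum_phiPrefix_eq_mul_length
      (fun i => sum_eq_mul_length_of_wordSlope_eq (hne i) (hw _ (hω i))) n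
    rw [← hω'.sum_range_length_phiPrefix n] at hsum
    exact_mod_cast congrArg (Rat.cast (K := ℝ)) hsum
  obtain ⟨C, hC⟩ := hω'.exists_abs_le hω hne
  exact tendsto_div_of_abs_sub_mul_le (abs_sum_range_sub_mul_le hC hexact)

/-- If φ is an anchor on S with weight w (all letter images have slope w), then the
image of every infinite word over S has slope w. -/
theorem stmt14 (S : Finset ℤ) (hS : S.Nonempty) (φ : ℤ → List ℤ)
    (hφ : ∀ s ∈ S, φ s ≠ []) (w : ℚ) (hw : ∀ s ∈ S, wordSlope (φ s) = w) :
    ∀ ω : ℕ → ℤ, (∀ i : ℕ, ω i ∈ S) → ∀ ω' : ℕ → ℤ, IsImage φ ω ω' →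
      HasSlope ω' (w : ℝ) :=
  stmt14_general S φ hφ w hw
end
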